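/- arXiv:2102.06771 — 2 statements merged into one kernel-verified Lean document; each statement's English description precedes it below -/
import Mathlib

section
/- Let g be in the closed unit ball of ℋ^∞(B_{ℓ₂},ℓ₂) and f ∈ 𝒜_u(B_{ℓ₂}). Then every h ∈ 𝒞ℓ(f,g) satisfies ‖h‖ ≤ ‖f‖, and 𝒞ℓ(f,g) is closed under pointwise limits: if (h_β) is a net in 𝒞ℓ(f,g) and h : B_{ℓ₂} → ℂ is a function with h_β(y) → h(y) for every y ∈ B_{ℓ₂}, then h is a bounded holomorphic function on B_{ℓ₂} and h ∈ 𝒞ℓ(f,g). -/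
open Metric Set Filter

noncomputable section

/-- `ℓ2` is the complex Hilbert space of square-summable sequences indexed by `ℕ`. -/
abbrev ℓ2 : Type := lp (fun _ : ℕ => ℂ) 2

/-- The open unit ball of `ℓ2`. -/
def oB : Set ℓ2 := Metric.ball 0 1

/-- The closed unit ball of `ℓ2`. -/
def cB : Set ℓ2 := Metric.closedBall 0 1

/-- The unit sphere of `ℓ2`. -/
def sph : Set ℓ2 := Metric.sphere 0 1

/-- The coordinate functional `x ↦ ⟨x, eₙ⟩ = xₙ` (inner product linear in the first variable). -/
def coord (n : ℕ) : ℓ2 → ℂ := fun x => x n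

/-- Supremum norm on the open unit ball, for scalar-valued functions. -/
def supNorm (f : ℓ2 → ℂ) : ℝ := ⨆ x : oB, ‖f (x : ℓ2)‖

/-- Supremum norm on the open unit ball, for `ℓ2`-valued functions. -/
def supNormV (g : ℓ2 → ℓ2) : ℝ := ⨆ x : oB, ‖g (x : ℓ2)‖

/-- Membership in `𝒜ᵤ(B)`: holomorphic on the open unit ball and uniformly continuous there. -/
def MemAu (f : ℓ2 → ℂ) : Prop :=
  DifferentiableOn ℂ f oB ∧ UniformContinuousOn f oB

/-- Membership in `ℋ^∞(B)`: holomorphic and bounded on the open unit ball. -/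
def MemHinf (f : ℓ2 → ℂ) : Prop :=
  DifferentiableOn ℂ f oB ∧ ∃ C, ∀ x ∈ oB, ‖f x‖ ≤ C

/-- Membership in `ℋ^∞(B,ℓ2)`: holomorphic and bounded on the open unit ball, `ℓ2`-valued. -/
def MemHinfV (g : ℓ2 → ℓ2) : Prop :=
  DifferentiableOn ℂ g oB ∧ ∃ C, ∀ x ∈ oB, ‖g x‖ ≤ C

/-- `fext` is (a representative of) the unique continuous extension `f̃` of `f` to the
closed unit ball. -/
def IsExt (f fext : ℓ2 → ℂ) : Prop :=
  ContinuousOn fext cB ∧ Set.EqOn fext f oB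

/-- An element of the scalar-valued spectrum `ℳᵤ(B)`: a nonzero continuous `ℂ`-algebra
homomorphism `𝒜ᵤ(B) → ℂ`, encoded as a map on representatives. -/
structure MuHom where
  toFun : (ℓ2 → ℂ) → ℂ
  map_add : ∀ f g, MemAu f → MemAu g → toFun (f + g) = toFun f + toFun g
  map_mul : ∀ f g, MemAu f → MemAu g → toFun (f * g) = toFun f * toFun g
  map_smul : ∀ (c : ℂ) (f), MemAu f → toFun (c • f) = c * toFun f
  respects : ∀ f g, MemAu f → MemAu g → Set.EqOn f g oB → toFun f = toFun g
  nonzero : ∃ f, MemAu f ∧ toFun f ≠ 0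
  cont : ∃ C, ∀ f, MemAu f → ‖toFun f‖ ≤ C * supNorm f

/-- An element of the vector-valued spectrum `ℳ_{u,∞}(B,B)`: a nonzero continuous `ℂ`-algebra
homomorphism `𝒜ᵤ(B) → ℋ^∞(B)`, encoded as a map on representatives. -/
structure MuInfHom where
  toFun : (ℓ2 → ℂ) → (ℓ2 → ℂ)
  maps_mem : ∀ f, MemAu f → MemHinf (toFun f)
  map_add : ∀ f g, MemAu f → MemAu g → ∀ x ∈ oB, toFun (f + g) x = toFun f x + toFun g x
  map_mul : ∀ f g, MemAu f → MemAu g → ∀ x ∈ oB, toFun (f * g) x = toFun f x * toFun g x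
  map_smul : ∀ (c : ℂ) (f), MemAu f → ∀ x ∈ oB, toFun (c • f) x = c * toFun f x
  respects : ∀ f g, MemAu f → MemAu g → Set.EqOn f g oB → Set.EqOn (toFun f) (toFun g) oB
  nonzero : ∃ f, MemAu f ∧ ∃ x ∈ oB, toFun f x ≠ 0
  cont : ∃ C, ∀ f, MemAu f → ∀ x ∈ oB, ‖toFun f x‖ ≤ C * supNorm f

/-- An element of the scalar-valued spectrum `ℳ_∞(B)`: a nonzero continuous `ℂ`-algebra
homomorphism `ℋ^∞(B) → ℂ`, encoded as a map on representatives. -/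
structure MInfHom where
  toFun : (ℓ2 → ℂ) → ℂ
  map_add : ∀ f g, MemHinf f → MemHinf g → toFun (f + g) = toFun f + toFun g
  map_mul : ∀ f g, MemHinf f → MemHinf g → toFun (f * g) = toFun f * toFun g
  map_smul : ∀ (c : ℂ) (f), MemHinf f → toFun (c • f) = c * toFun f
  respects : ∀ f g, MemHinf f → MemHinf g → Set.EqOn f g oB → toFun f = toFun g
  nonzero : ∃ f, MemHinf f ∧ toFun f ≠ 0
  cont : ∃ C, ∀ f, MemHinf f → ‖toFun f‖ ≤ C * supNorm f

/-- `ξ(Φ) = g`: the projection of `Φ` is the function `g`, i.e. `Φ(⟨·,eₙ⟩)(x) = g(x)ₙ`. -/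
def xiEq (Φ : MuInfHom) (g : ℓ2 → ℓ2) : Prop :=
  ∀ x ∈ oB, ∀ n : ℕ, Φ.toFun (coord n) x = g x n

/-- `Φ = C_g`: `Φ` is the composition homomorphism `f ↦ f̃ ∘ g`. -/
def IsCompHom (Φ : MuInfHom) (g : ℓ2 → ℓ2) : Prop :=
  ∀ f fext, MemAu f → IsExt f fext → ∀ x ∈ oB, Φ.toFun f x = fext (g x)

/-- The open unit ball of `ℋ^∞(B,ℓ2)`. -/
def ballHV : Set (ℓ2 → ℓ2) := {h | MemHinfV h ∧ supNormV h < 1}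

/-- The open unit ball of `ℋ^∞(B)`. -/
def ballH : Set (ℓ2 → ℂ) := {h | MemHinf h ∧ supNorm h < 1}

/-- `F` is holomorphic on the open unit ball of `ℋ^∞(B,ℓ2)`: it is locally bounded there and
`ℂ`-differentiable along every complex line (which, for maps on a ball of a Banach space, is
equivalent to Fréchet holomorphy). -/
def HolomorphicOnBallHV (F : (ℓ2 → ℓ2) → ℂ) : Prop :=
  (∀ h ∈ ballHV, ∃ ε > 0, ∃ C, ∀ k ∈ ballHV, supNormV (k - h) < ε → ‖F k‖ ≤ C) ∧
  (∀ h ∈ ballHV, ∀ k, MemHinfV k →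
    DifferentiableOn ℂ (fun z : ℂ => F (h + z • k)) {z : ℂ | (h + z • k) ∈ ballHV})

/-- `F` is holomorphic on the open unit ball of `ℋ^∞(B)`: it is locally bounded there and
`ℂ`-differentiable along every complex line. -/
def HolomorphicOnBallH (F : (ℓ2 → ℂ) → ℂ) : Prop :=
  (∀ h ∈ ballH, ∃ ε > 0, ∃ C, ∀ k ∈ ballH, supNorm (k - h) < ε → ‖F k‖ ≤ C) ∧
  (∀ h ∈ ballH, ∀ k, MemHinf k →
    DifferentiableOn ℂ (fun z : ℂ => F (h + z • k)) {z : ℂ | (h + z • k) ∈ ballH})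

/-- `h ∈ 𝒞ℓ(f,g)` (with `fext = f̃` the continuous extension of `f` to the closed ball):
there is a net `(g_α)` in the open unit ball of `ℋ^∞(B,ℓ2)` converging weak-star to `g`
(pointwise weak convergence of values) with `f̃(g_α(y)) → h(y)` for every `y ∈ B`. -/
def InCluster (fext : ℓ2 → ℂ) (g : ℓ2 → ℓ2) (h : ℓ2 → ℂ) : Prop :=
  ∃ (ι : Type) (l : Filter ι), l.NeBot ∧ ∃ gA : ι → ℓ2 → ℓ2,
    (∀ i, gA i ∈ ballHV) ∧
    (∀ y ∈ oB, ∀ u : ℓ2,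
      Filter.Tendsto (fun i => (inner ℂ (gA i y) u : ℂ)) l (nhds (inner ℂ (g y) u))) ∧
    (∀ y ∈ oB, Filter.Tendsto (fun i => fext (gA i y)) l (nhds (h y)))


set_option maxHeartbeats 1000000

section Aux

lemma zero_mem_oB : (0 : ℓ2) ∈ oB := by simp [oB]

lemma oB_open : IsOpen oB := Metric.isOpen_ball

instance : Nonempty oB := ⟨⟨0, zero_mem_oB⟩⟩

lemma mem_oB_iff {x : ℓ2} : x ∈ oB ↔ ‖x‖ < 1 := by
  simp [oB, Metric.mem_ball, dist_eq_norm]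

/-- A uniformly continuous function on the open unit ball is bounded. -/
lemma memAu_bounded {f : ℓ2 → ℂ} (hf : MemAu f) : ∃ M, ∀ x ∈ oB, ‖f x‖ ≤ M := by
  obtain ⟨δ, hδ0, hδ⟩ := Metric.uniformContinuousOn_iff.1 hf.2 1 one_pos
  obtain ⟨N, hN⟩ := exists_nat_gt (2 / δ)
  have hN0 : 0 < (N : ℝ) := lt_trans (by positivity) hN
  refine ⟨‖f 0‖ + N, fun x hx => ?_⟩
  have hxn : ‖x‖ < 1 := mem_oB_iff.1 hx
  have hmem : ∀ j : ℕ, (j : ℝ) ≤ N → (((j : ℝ) / N) • x) ∈ oB := by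
    intro j hj
    rw [mem_oB_iff, norm_smul]
    have h1 : ‖((j : ℝ) / N)‖ ≤ 1 := by
      rw [Real.norm_eq_abs, abs_of_nonneg (by positivity), div_le_one hN0]; exact hj
    nlinarith [norm_nonneg x]
  have key : ∀ k : ℕ, (k : ℝ) ≤ N → ‖f (((k : ℝ) / N) • x) - f 0‖ ≤ k := by
    intro k
    induction k with
    | zero => intro _; simp
    | succ k ih =>
      intro hk
      have hkN : ((k : ℝ) + 1) ≤ N := by push_cast at hk; linarith
      have hk' : (k : ℝ) ≤ N := by linarith
      have hd : dist (((((k : ℕ) + 1 : ℕ) : ℝ) / N) • x) (((k : ℝ) / N) • x) < δ := by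
        have he : ((((k : ℕ) + 1 : ℕ) : ℝ) / N) • x - ((k : ℝ) / N) • x
            = ((1 : ℝ) / N) • x := by
          rw [← sub_smul]; congr 1; push_cast; ring
        rw [dist_eq_norm, he, norm_smul, Real.norm_eq_abs,
          abs_of_nonneg (by positivity : (0:ℝ) ≤ 1 / N)]
        have h3 : (1 : ℝ) / N < δ := by
          rw [div_lt_iff₀ hN0]
          have := (div_lt_iff₀ hδ0).1 hN
          nlinarith
        nlinarith [norm_nonneg x, (by positivity : (0:ℝ) < 1 / N)]
      have hstep := hδ _ (hmem (k+1) (by push_cast; linarith)) _ (hmem k hk') hd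
      rw [dist_eq_norm] at hstep
      have hih := ih hk'
      calc ‖f (((((k : ℕ) + 1 : ℕ) : ℝ) / N) • x) - f 0‖
          ≤ ‖f (((((k : ℕ) + 1 : ℕ) : ℝ) / N) • x) - f (((k : ℝ) / N) • x)‖
            + ‖f (((k : ℝ) / N) • x) - f 0‖ := norm_sub_le_norm_sub_add_norm_sub _ _ _
        _ ≤ ((k : ℕ) + 1 : ℕ) := by push_cast at hstep hih ⊢; linarith
  have hfin := key N le_rfl
  rw [div_self (ne_of_gt hN0), one_smul] at hfin
  have h4 : ‖f x‖ ≤ ‖f x - f 0‖ + ‖f 0‖ := by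
    simpa using norm_add_le (f x - f 0) (f 0)
  linarith

end Aux
section Quad
open scoped ENNReal NNReal

open intervalIntegral in
/-- Quadratic Taylor estimate for a bounded holomorphic function on the unit ball. -/
lemma quad_bound {F : ℓ2 → ℂ} {M : ℝ} (hF : DifferentiableOn ℂ F oB)
    (hM : ∀ y ∈ oB, ‖F y‖ ≤ M) {x : ℓ2} (hx : x ∈ oB) {D : ℓ2 →L[ℂ] ℂ}
    (hD : HasFDerivAt F D x) {v : ℓ2} (hv : ‖v‖ ≤ (1 - ‖x‖) / 2) :
    ‖F (x + v) - F x - D v‖ ≤ 6 * M / (1 - ‖x‖) ^ 2 * ‖v‖ ^ 2 := by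
  have hx1 : ‖x‖ < 1 := mem_oB_iff.1 hx
  have hd0 : 0 < 1 - ‖x‖ := by linarith
  have hM0 : 0 ≤ M := le_trans (norm_nonneg _) (hM x hx)
  rcases eq_or_ne v 0 with rfl | hv0
  · simp only [add_zero, map_zero, sub_zero, sub_self, norm_zero]
    positivity
  have hv0' : 0 < ‖v‖ := norm_pos_iff.2 hv0
  obtain ⟨ρ, hρeq⟩ : ∃ ρ : ℝ, ρ = 3 * (1 - ‖x‖) / (4 * ‖v‖) := ⟨_, rfl⟩
  have hρ0 : 0 < ρ := by rw [hρeq]; positivity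
  set ρnn : ℝ≥0 := Real.toNNReal ρ with hρnn
  have hcoe : (ρnn : ℝ) = ρ := Real.coe_toNNReal _ hρ0.le
  have hρ32 : (3 : ℝ) / 2 ≤ ρ := by
    rw [hρeq, le_div_iff₀ (by positivity)]
    nlinarith
  set φ : ℂ → ℂ := fun z => F (x + z • v) with hφdef
  have hmap : ∀ z : ℂ, z ∈ Metric.closedBall (0 : ℂ) ρ → x + z • v ∈ oB := by
    intro z hz
    rw [Metric.mem_closedBall, dist_zero_right] at hz
    rw [mem_oB_iff]
    calc ‖x + z • v‖ ≤ ‖x‖ + ‖z • v‖ := norm_add_le _ _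
      _ = ‖x‖ + ‖z‖ * ‖v‖ := by rw [norm_smul]
      _ ≤ ‖x‖ + ρ * ‖v‖ := by nlinarith
      _ = ‖x‖ + 3 * (1 - ‖x‖) / 4 := by
          rw [hρeq]; field_simp
      _ < 1 := by linarith
  have haff : ∀ z₀ : ℂ, HasDerivAt (fun z : ℂ => x + z • v) v z₀ := by
    intro z₀
    simpa using ((hasDerivAt_id z₀).smul_const v).const_add x
  have hφdiff : DifferentiableOn ℂ φ (Metric.closedBall 0 ρ) := by
    intro z hz
    have h2 : DifferentiableAt ℂ F (x + z • v) :=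
      hF.differentiableAt (oB_open.mem_nhds (hmap z hz))
    exact (h2.comp z (haff z).differentiableAt).differentiableWithinAt
  have hφdiff' : DifferentiableOn ℂ φ (Metric.closedBall 0 (ρnn : ℝ)) := by
    rwa [hcoe]
  have hρnn0 : (0 : ℝ≥0) < ρnn := by
    have h0 : (0:ℝ) < (ρnn : ℝ) := by rw [hcoe]; exact hρ0
    exact_mod_cast h0
  have hp0 := hφdiff'.hasFPowerSeriesOnBall hρnn0
  rw [hcoe] at hp0
  set p := cauchyPowerSeries φ 0 ρ with hpdef
  have hp : HasFPowerSeriesOnBall φ p 0 (ρnn : ℝ≥0∞) := hp0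
  -- coefficient bounds
  have hcoef : ∀ n, ‖p n‖ ≤ M / ρ ^ n := by
    intro n
    have h1 := norm_cauchyPowerSeries_le φ 0 ρ n
    have hcont : Continuous fun θ : ℝ => ‖φ (circleMap 0 ρ θ)‖ := by
      have hc1 : ContinuousOn φ (Metric.closedBall 0 ρ) := hφdiff.continuousOn
      exact (hc1.comp_continuous (continuous_circleMap 0 ρ)
        (fun θ => circleMap_mem_closedBall 0 hρ0.le θ)).norm
    have h2 : (∫ θ : ℝ in (0)..2 * Real.pi, ‖φ (circleMap 0 ρ θ)‖)
        ≤ ∫ _ : ℝ in (0)..2 * Real.pi, M := by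
      apply intervalIntegral.integral_mono_on Real.two_pi_pos.le
        (hcont.intervalIntegrable _ _) intervalIntegrable_const
      intro θ _
      exact hM _ (hmap _ (circleMap_mem_closedBall 0 hρ0.le θ))
    rw [intervalIntegral.integral_const, sub_zero, smul_eq_mul] at h2
    have h3 : ((2 * Real.pi)⁻¹ * ∫ θ : ℝ in (0)..2 * Real.pi, ‖φ (circleMap 0 ρ θ)‖)
        * |ρ|⁻¹ ^ n ≤ M / ρ ^ n := by
      rw [abs_of_pos hρ0]
      have hπ : 0 < 2 * Real.pi := Real.two_pi_pos
      have : (2 * Real.pi)⁻¹ * ∫ θ : ℝ in (0)..2 * Real.pi, ‖φ (circleMap 0 ρ θ)‖ ≤ M := by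
        rw [inv_mul_le_iff₀ hπ]
        linarith
      calc ((2 * Real.pi)⁻¹ * ∫ θ : ℝ in (0)..2 * Real.pi, ‖φ (circleMap 0 ρ θ)‖) * ρ⁻¹ ^ n
          ≤ M * ρ⁻¹ ^ n := by
            apply mul_le_mul_of_nonneg_right this (by positivity)
        _ = M / ρ ^ n := by rw [inv_pow]; ring
    exact le_trans h1 h3
  -- sum at w = 1
  have h1ρ : (1 : ℝ≥0) < ρnn := by
    have h1 : (1:ℝ) < (ρnn : ℝ) := by rw [hcoe]; linarith
    exact_mod_cast h1
  have hmem1 : (1 : ℂ) ∈ Metric.eball (0 : ℂ) (ρnn : ℝ≥0∞) := by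
    rw [mem_emetric_ball_zero_iff]
    simp only [enorm_one]
    exact_mod_cast h1ρ
  have hsum : HasSum (fun n => p n fun _ => (1 : ℂ)) (φ (0 + 1)) := hp.hasSum hmem1
  set c : ℕ → ℂ := fun n => p n fun _ => (1 : ℂ) with hcdef
  have hcb : ∀ n, ‖c n‖ ≤ M / ρ ^ n := by
    intro n
    calc ‖c n‖ ≤ ‖p n‖ * ∏ _i : Fin n, ‖(1 : ℂ)‖ := (p n).le_opNorm _
      _ = ‖p n‖ := by simp
      _ ≤ M / ρ ^ n := hcoef n
  have htail : HasSum (fun n => c (n + 2)) (φ (0 + 1) - ∑ i ∈ Finset.range 2, c i) :=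
    (hasSum_nat_add_iff' 2).2 hsum
  have hρinv : ρ⁻¹ < 1 := by
    rw [inv_lt_one_iff₀]; right; linarith
  have hgeo : Summable fun n : ℕ => M / ρ ^ 2 * ρ⁻¹ ^ n :=
    (summable_geometric_of_lt_one (by positivity) hρinv).mul_left _
  have hbound : ∀ n : ℕ, ‖c (n + 2)‖ ≤ M / ρ ^ 2 * ρ⁻¹ ^ n := by
    intro n
    calc ‖c (n + 2)‖ ≤ M / ρ ^ (n + 2) := hcb _
      _ = M / ρ ^ 2 * ρ⁻¹ ^ n := by
        rw [pow_add, div_mul_eq_div_div, div_right_comm, inv_pow]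
        exact div_eq_mul_inv _ _
  have hsummable : Summable fun n => ‖c (n + 2)‖ :=
    Summable.of_nonneg_of_le (fun n => norm_nonneg _) hbound hgeo
  have hnorm : ‖φ (0 + 1) - ∑ i ∈ Finset.range 2, c i‖ ≤ M / ρ ^ 2 * (1 - ρ⁻¹)⁻¹ := by
    rw [← htail.tsum_eq]
    calc ‖∑' n, c (n + 2)‖ ≤ ∑' n, ‖c (n + 2)‖ := norm_tsum_le_tsum_norm hsummable
      _ ≤ ∑' n : ℕ, M / ρ ^ 2 * ρ⁻¹ ^ n := Summable.tsum_le_tsum hbound hsummable hgeo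
      _ = M / ρ ^ 2 * (1 - ρ⁻¹)⁻¹ := by
        rw [tsum_mul_left, tsum_geometric_of_lt_one (by positivity) hρinv]
  -- identify the pieces
  have hc0 : c 0 = F x := by
    have := hp.coeff_zero fun _ => (1 : ℂ)
    rw [hcdef]
    simpa [hφdef] using this
  have hc1 : c 1 = D v := by
    have h2 : HasDerivAt φ (c 1) 0 := hp.hasFPowerSeriesAt.hasDerivAt
    have h1 : HasDerivAt φ (D v) 0 := by
      have h3 : HasFDerivAt F D (x + (0 : ℂ) • v) := by simpa using hD
      exact h3.comp_hasDerivAt (0 : ℂ) (haff 0)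
    exact h2.unique h1
  have hφ1 : φ (0 + 1) = F (x + v) := by simp [hφdef]
  have hsum2 : ∑ i ∈ Finset.range 2, c i = F x + D v := by
    rw [Finset.sum_range_succ, Finset.sum_range_one, hc0, hc1]
  rw [hφ1, hsum2] at hnorm
  have harith : M / ρ ^ 2 * (1 - ρ⁻¹)⁻¹ ≤ 6 * M / (1 - ‖x‖) ^ 2 * ‖v‖ ^ 2 := by
    have h13 : (1 : ℝ) / 3 ≤ 1 - ρ⁻¹ := by
      have : ρ⁻¹ ≤ 2 / 3 := by
        rw [inv_le_comm₀ hρ0 (by norm_num)]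
        linarith
      linarith
    have h3 : (1 - ρ⁻¹)⁻¹ ≤ 3 := by
      rw [inv_le_comm₀ (by linarith) (by norm_num)]
      linarith
    have hρval : ρ ^ 2 = 9 * (1 - ‖x‖) ^ 2 / (16 * ‖v‖ ^ 2) := by
      rw [hρeq]
      field_simp
      ring
    have hfrac : M / ρ ^ 2 = 16 / 3 * M * (‖v‖ ^ 2 / (1 - ‖x‖) ^ 2) / 3 := by
      rw [hρval]
      field_simp
      ring
    have hq : (0:ℝ) ≤ ‖v‖ ^ 2 / (1 - ‖x‖) ^ 2 := by positivity
    have hrhs : 6 * M / (1 - ‖x‖) ^ 2 * ‖v‖ ^ 2 = 6 * M * (‖v‖ ^ 2 / (1 - ‖x‖) ^ 2) := by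
      ring
    calc M / ρ ^ 2 * (1 - ρ⁻¹)⁻¹ ≤ M / ρ ^ 2 * 3 := by
          apply mul_le_mul_of_nonneg_left h3 (by positivity)
      _ = 16 / 3 * M * (‖v‖ ^ 2 / (1 - ‖x‖) ^ 2) := by rw [hfrac]; ring
      _ ≤ 6 * M * (‖v‖ ^ 2 / (1 - ‖x‖) ^ 2) := by nlinarith [mul_nonneg hM0 hq]
      _ = 6 * M / (1 - ‖x‖) ^ 2 * ‖v‖ ^ 2 := hrhs.symm
  calc ‖F (x + v) - F x - D v‖ = ‖F (x + v) - (F x + D v)‖ := by rw [sub_sub]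
    _ ≤ M / ρ ^ 2 * (1 - ρ⁻¹)⁻¹ := hnorm
    _ ≤ 6 * M / (1 - ‖x‖) ^ 2 * ‖v‖ ^ 2 := harith

end Quad
section Limit

/-- Pointwise limit (along a nontrivial filter) of uniformly bounded holomorphic functions
on the ball is holomorphic and satisfies the same bound. -/
lemma holo_limit {ι : Type} {l : Filter ι} (hl : l.NeBot) {H : ι → ℓ2 → ℂ} {M : ℝ}
    (hd : ∀ i, DifferentiableOn ℂ (H i) oB) (hb : ∀ i, ∀ y ∈ oB, ‖H i y‖ ≤ M)
    {h : ℓ2 → ℂ} (hlim : ∀ y ∈ oB, Filter.Tendsto (fun i => H i y) l (nhds (h y))) :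
    DifferentiableOn ℂ h oB ∧ ∀ y ∈ oB, ‖h y‖ ≤ M := by
  haveI := hl
  have hbnd : ∀ y ∈ oB, ‖h y‖ ≤ M := by
    intro y hy
    exact le_of_tendsto (hlim y hy).norm (Filter.Eventually.of_forall fun i => hb i y hy)
  refine ⟨fun x hx => ?_, hbnd⟩
  -- setup
  have hx1 : ‖x‖ < 1 := mem_oB_iff.1 hx
  have hd0 : 0 < 1 - ‖x‖ := by linarith
  set δ : ℝ := (1 - ‖x‖) / 2 with hδdef
  have hδ0 : 0 < δ := by positivity
  set K : ℝ := 6 * M / (1 - ‖x‖) ^ 2 with hKdef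
  obtain ⟨i₀⟩ : Nonempty ι := nonempty_of_neBot l
  have hM0 : 0 ≤ M := le_trans (norm_nonneg _) (hb i₀ x hx)
  have hK0 : 0 ≤ K := by positivity
  set D : ι → ℓ2 →L[ℂ] ℂ := fun i => fderiv ℂ (H i) x with hDdef
  have hDi : ∀ i, HasFDerivAt (H i) (D i) x := fun i =>
    ((hd i).differentiableAt (oB_open.mem_nhds hx)).hasFDerivAt
  have hquad : ∀ i, ∀ v : ℓ2, ‖v‖ ≤ δ → ‖H i (x + v) - H i x - D i v‖ ≤ K * ‖v‖ ^ 2 :=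
    fun i v hv => quad_bound (hd i) (hb i) hx (hDi i) hv
  have hmemδ : ∀ v : ℓ2, ‖v‖ ≤ δ → x + v ∈ oB := by
    intro v hv
    rw [mem_oB_iff]
    calc ‖x + v‖ ≤ ‖x‖ + ‖v‖ := norm_add_le _ _
      _ ≤ ‖x‖ + δ := by linarith
      _ < 1 := by rw [hδdef]; linarith
  -- Step 1: the directional derivatives converge
  have hconv : ∀ v : ℓ2, ∃ c : ℂ, Filter.Tendsto (fun i => D i v) l (nhds c) := by
    intro v
    rcases eq_or_ne v 0 with rfl | hv0
    · exact ⟨0, by simpa using tendsto_const_nhds⟩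
    have hv0' : 0 < ‖v‖ := norm_pos_iff.2 hv0
    have key : Cauchy (Filter.map (fun i => D i v) l) := by
      rw [Metric.cauchy_iff]
      refine ⟨Filter.map_neBot, fun ε hε => ?_⟩
      -- pick a small real parameter t
      obtain ⟨n, hn⟩ := exists_nat_gt (6 * K * δ * ‖v‖ / ε)
      set t : ℝ := δ / (‖v‖ * (n + 1)) with htdef
      have hn1 : (0:ℝ) < n + 1 := by positivity
      have ht0 : 0 < t := by positivity
      have htv : ‖(t : ℂ) • v‖ = δ / (n + 1) := by
        rw [norm_smul, Complex.norm_real, Real.norm_eq_abs, abs_of_pos ht0, htdef]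
        field_simp
      have htδ : ‖(t : ℂ) • v‖ ≤ δ := by
        rw [htv, div_le_iff₀ hn1]
        nlinarith
      have herr : ∀ i, ‖D i v - (H i (x + (t : ℂ) • v) - H i x) / t‖ ≤ K * δ * ‖v‖ / (n + 1) := by
        intro i
        have h1 := hquad i ((t : ℂ) • v) htδ
        have h2 : D i ((t : ℂ) • v) = (t : ℂ) * D i v := by
          rw [map_smul]; simp [smul_eq_mul]
        rw [h2] at h1
        have h3 : D i v - (H i (x + (t : ℂ) • v) - H i x) / t
            = -((H i (x + (t : ℂ) • v) - H i x - (t : ℂ) * D i v) / t) := by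
          have ht0' : (t : ℂ) ≠ 0 := by exact_mod_cast ht0.ne'
          field_simp
          ring
        rw [h3, norm_neg, norm_div]
        rw [htv] at h1
        have h4 : ‖(t : ℂ)‖ = t := by
          rw [Complex.norm_real, Real.norm_eq_abs, abs_of_pos ht0]
        rw [h4]
        rw [div_le_div_iff₀ ht0 hn1]
        calc ‖H i (x + (t : ℂ) • v) - H i x - (t : ℂ) * D i v‖ * (n + 1)
            ≤ K * (δ / (n + 1)) ^ 2 * (n + 1) := by
              apply mul_le_mul_of_nonneg_right h1 hn1.le
          _ = K * δ * (δ / (n + 1)) := by field_simp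
          _ = K * δ * ‖v‖ * t := by
              rw [htdef]; field_simp
      have hKn : K * δ * ‖v‖ / (n + 1) < ε / 6 := by
        rw [div_lt_iff₀ hn1]
        rw [div_lt_iff₀ hε] at hn
        linarith
      -- the quotient converges
      have hq : Filter.Tendsto (fun i => (H i (x + (t : ℂ) • v) - H i x) / t) l
          (nhds ((h (x + (t : ℂ) • v) - h x) / t)) :=
        (Filter.Tendsto.sub (hlim _ (hmemδ _ htδ)) (hlim x hx)).div_const _
      have hev : ∀ᶠ i in l, dist ((H i (x + (t : ℂ) • v) - H i x) / t)
          ((h (x + (t : ℂ) • v) - h x) / t) < ε / 6 :=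
        Metric.tendsto_nhds.1 hq _ (by positivity)
      refine ⟨Metric.ball ((h (x + (t : ℂ) • v) - h x) / t) (ε / 2), ?_, ?_⟩
      · rw [Filter.mem_map]
        apply Filter.mem_of_superset hev
        intro i hi
        simp only [Set.mem_preimage, Metric.mem_ball]
        calc dist (D i v) ((h (x + (t : ℂ) • v) - h x) / t)
            ≤ dist (D i v) ((H i (x + (t : ℂ) • v) - H i x) / t)
              + dist ((H i (x + (t : ℂ) • v) - H i x) / t) ((h (x + (t : ℂ) • v) - h x) / t) :=
              dist_triangle _ _ _
          _ < ε / 6 + ε / 6 := by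
              refine add_lt_add_of_le_of_lt ?_ hi
              rw [dist_eq_norm]
              exact le_trans (herr i) hKn.le
          _ < ε / 2 := by linarith
      · intro a ha b hb'
        rw [Metric.mem_ball] at ha hb'
        calc dist a b ≤ dist a ((h (x + (t : ℂ) • v) - h x) / t)
              + dist ((h (x + (t : ℂ) • v) - h x) / t) b := dist_triangle _ _ _
          _ < ε := by rw [dist_comm ((h (x + (t : ℂ) • v) - h x) / t) b] at *; linarith
    exact cauchy_map_iff_exists_tendsto.1 key
  choose L hL using hconv
  -- Step 2: linearity and boundedness of L
  have hLadd : ∀ v w : ℓ2, L (v + w) = L v + L w := by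
    intro v w
    have h1 : Filter.Tendsto (fun i => D i (v + w)) l (nhds (L v + L w)) := by
      have := (hL v).add (hL w)
      simpa [map_add] using this
    exact tendsto_nhds_unique (hL (v + w)) h1
  have hLsmul : ∀ (a : ℂ) (v : ℓ2), L (a • v) = a • L v := by
    intro a v
    have h1 : Filter.Tendsto (fun i => D i (a • v)) l (nhds (a • L v)) := by
      have := (hL v).const_smul a
      simpa [map_smul] using this
    exact tendsto_nhds_unique (hL (a • v)) h1
  have hLbound : ∀ v : ℓ2, ‖L v‖ ≤ (2 * M + K * δ ^ 2) / δ * ‖v‖ := by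
    intro v
    rcases eq_or_ne v 0 with rfl | hv0
    · have : L 0 = 0 := by
        have := hLsmul 0 0
        simpa using this
      simp [this]
    have hv0' : 0 < ‖v‖ := norm_pos_iff.2 hv0
    set u : ℓ2 := ((δ / ‖v‖ : ℝ) : ℂ) • v with hudef
    have hu : ‖u‖ = δ := by
      rw [hudef, norm_smul, Complex.norm_real, Real.norm_eq_abs, abs_of_pos (by positivity)]
      field_simp
    have hDu : ∀ i, ‖D i u‖ ≤ 2 * M + K * δ ^ 2 := by
      intro i
      have h1 := hquad i u (le_of_eq hu)
      have h2 : ‖D i u‖ ≤ ‖H i (x + u)‖ + ‖H i x‖ + ‖H i (x + u) - H i x - D i u‖ := by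
        have key0 : H i (x + u) - H i x - (H i (x + u) - H i x - D i u) = D i u := by ring
        have h5 := norm_sub_le (H i (x + u) - H i x) (H i (x + u) - H i x - D i u)
        rw [key0] at h5
        have h6 := norm_sub_le (H i (x + u)) (H i x)
        linarith
      have h3 := hb i (x + u) (hmemδ u (le_of_eq hu))
      have h4 := hb i x hx
      rw [hu] at h1
      linarith
    have hLu : ‖L u‖ ≤ 2 * M + K * δ ^ 2 :=
      le_of_tendsto (hL u).norm (Filter.Eventually.of_forall hDu)
    have hvu : v = ((‖v‖ / δ : ℝ) : ℂ) • u := by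
      rw [hudef, smul_smul]
      have : ((‖v‖ / δ : ℝ) : ℂ) * ((δ / ‖v‖ : ℝ) : ℂ) = 1 := by
        rw [← Complex.ofReal_mul]
        have : ‖v‖ / δ * (δ / ‖v‖) = 1 := by field_simp
        rw [this, Complex.ofReal_one]
      rw [this, one_smul]
    calc ‖L v‖ = ‖L (((‖v‖ / δ : ℝ) : ℂ) • u)‖ := by rw [← hvu]
      _ = ‖v‖ / δ * ‖L u‖ := by
          rw [hLsmul, norm_smul, Complex.norm_real, Real.norm_eq_abs,
            abs_of_pos (by positivity)]
      _ ≤ ‖v‖ / δ * (2 * M + K * δ ^ 2) := by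
          apply mul_le_mul_of_nonneg_left hLu (by positivity)
      _ = (2 * M + K * δ ^ 2) / δ * ‖v‖ := by ring
  -- Step 3: the continuous linear map
  set T : ℓ2 →L[ℂ] ℂ := LinearMap.mkContinuous
    { toFun := L, map_add' := hLadd, map_smul' := hLsmul } ((2 * M + K * δ ^ 2) / δ)
    hLbound with hTdef
  have hTv : ∀ v, T v = L v := fun v => rfl
  -- Step 4: the quadratic bound passes to the limit
  have hquadh : ∀ v : ℓ2, ‖v‖ ≤ δ → ‖h (x + v) - h x - L v‖ ≤ K * ‖v‖ ^ 2 := by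
    intro v hv
    have h1 : Filter.Tendsto (fun i => H i (x + v) - H i x - D i v) l
        (nhds (h (x + v) - h x - L v)) :=
      ((hlim _ (hmemδ v hv)).sub (hlim x hx)).sub (hL v)
    exact le_of_tendsto h1.norm (Filter.Eventually.of_forall fun i => hquad i v hv)
  -- Step 5: h is differentiable at x
  have hder : HasFDerivAt h T x := by
    rw [hasFDerivAt_iff_isLittleO_nhds_zero]
    rw [Asymptotics.isLittleO_iff]
    intro ε hε
    have hr0 : 0 < min δ (ε / (K + 1)) := lt_min hδ0 (by positivity)
    rw [Metric.eventually_nhds_iff]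
    refine ⟨min δ (ε / (K + 1)), hr0, fun {v} hvlt => ?_⟩
    rw [dist_zero_right] at hvlt
    have hv1 : ‖v‖ ≤ δ := le_of_lt (lt_of_lt_of_le hvlt (min_le_left _ _))
    have hv2 : ‖v‖ ≤ ε / (K + 1) := le_of_lt (lt_of_lt_of_le hvlt (min_le_right _ _))
    calc ‖h (x + v) - h x - T v‖ ≤ K * ‖v‖ ^ 2 := by rw [hTv]; exact hquadh v hv1
      _ = K * ‖v‖ * ‖v‖ := by ring
      _ ≤ ε * ‖v‖ := by
          apply mul_le_mul_of_nonneg_right _ (norm_nonneg v)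
          calc K * ‖v‖ ≤ K * (ε / (K + 1)) := by
                apply mul_le_mul_of_nonneg_left hv2 hK0
            _ ≤ ε := by
                rw [mul_comm, div_mul_eq_mul_div, div_le_iff₀ (by positivity : (0:ℝ) < K + 1)]
                nlinarith
      _ = ε * ‖id v‖ := by simp
  exact hder.differentiableAt.differentiableWithinAt

end Limit
section Cluster

lemma ballHV_mem_oB {k : ℓ2 → ℓ2} (hk : k ∈ ballHV) {y : ℓ2} (hy : y ∈ oB) : k y ∈ oB := by
  obtain ⟨C, hC⟩ := hk.1.2
  have hbdd : BddAbove (Set.range fun x : oB => ‖k (x : ℓ2)‖) := by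
    refine ⟨C, ?_⟩
    rintro _ ⟨⟨z, hz⟩, rfl⟩
    exact hC z hz
  have h1 : ‖k y‖ ≤ supNormV k := le_ciSup hbdd (⟨y, hy⟩ : oB)
  exact mem_oB_iff.2 (lt_of_le_of_lt h1 hk.2)

lemma norm_le_supNorm {f : ℓ2 → ℂ} (hbd : ∃ C, ∀ x ∈ oB, ‖f x‖ ≤ C) {y : ℓ2}
    (hy : y ∈ oB) : ‖f y‖ ≤ supNorm f := by
  obtain ⟨C, hC⟩ := hbd
  have hbdd : BddAbove (Set.range fun x : oB => ‖f (x : ℓ2)‖) := by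
    refine ⟨C, ?_⟩
    rintro _ ⟨⟨z, hz⟩, rfl⟩
    exact hC z hz
  exact le_ciSup hbdd (⟨y, hy⟩ : oB)

lemma supNorm_le {f : ℓ2 → ℂ} {C : ℝ} (h : ∀ x ∈ oB, ‖f x‖ ≤ C) : supNorm f ≤ C :=
  ciSup_le fun y => h y y.2

/-- Pointwise bound for cluster set elements. -/
lemma cluster_bound {f fext : ℓ2 → ℂ} {g : ℓ2 → ℓ2} {h : ℓ2 → ℂ} {C : ℝ}
    (hext : IsExt f fext) (hC : ∀ z ∈ oB, ‖f z‖ ≤ C) (hcl : InCluster fext g h) :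
    ∀ y ∈ oB, ‖h y‖ ≤ C := by
  obtain ⟨κ, lκ, hne, gA, hball, hw, hfc⟩ := hcl
  haveI := hne
  intro y hy
  refine le_of_tendsto (hfc y hy).norm (Filter.Eventually.of_forall fun j => ?_)
  have hmem := ballHV_mem_oB (hball j) hy
  rw [hext.2 hmem]
  exact hC _ hmem

set_option synthInstance.maxHeartbeats 1000000 in
/-- The cluster set is closed under pointwise limits of nets. -/
lemma cluster_closed {f fext : ℓ2 → ℂ} {g : ℓ2 → ℓ2} (hext : IsExt f fext)
    {ι : Type} {l : Filter ι} (hl : l.NeBot) {H : ι → ℓ2 → ℂ}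
    (hH : ∀ i, InCluster fext g (H i)) {h : ℓ2 → ℂ}
    (hlim : ∀ y ∈ oB, Filter.Tendsto (fun i => H i y) l (nhds (h y))) :
    InCluster fext g h := by
  classical
  letI : DecidableEq ℓ2 := Classical.decEq _
  haveI := hl
  have hinv : ∀ (ε : ℝ), 0 < ε → ∃ n₀ : ℕ, 1 / ((n₀ : ℝ) + 1) < ε := by
    intro ε hε
    obtain ⟨n₀, hn₀⟩ := exists_nat_gt (1 / ε)
    refine ⟨n₀, ?_⟩
    rw [div_lt_iff₀ (by positivity)]
    rw [div_lt_iff₀ hε] at hn₀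
    nlinarith
  have key : ∀ (i : ι) (S T : Finset ℓ2) (n : ℕ), ∃ k : ℓ2 → ℓ2, k ∈ ballHV ∧
      (∀ y ∈ S, y ∈ oB → ∀ u ∈ T,
        dist (inner ℂ (k y) u : ℂ) (inner ℂ (g y) u) < 1 / ((n : ℝ) + 1)) ∧
      (∀ y ∈ S, y ∈ oB → dist (fext (k y)) (H i y) < 1 / ((n : ℝ) + 1)) := by
    intro i S T n
    obtain ⟨κ, lκ, hne, gA, hball, hw, hfc⟩ := hH i
    haveI := hne
    have hpos : (0 : ℝ) < 1 / ((n : ℝ) + 1) := by positivity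
    have ev1 : ∀ᶠ j in lκ, ∀ y ∈ S, y ∈ oB → ∀ u ∈ T,
        dist (inner ℂ (gA j y) u : ℂ) (inner ℂ (g y) u) < 1 / ((n : ℝ) + 1) := by
      rw [eventually_all_finset]
      intro y _
      by_cases hy : y ∈ oB
      · have ev : ∀ᶠ j in lκ, ∀ u ∈ T,
            dist (inner ℂ (gA j y) u : ℂ) (inner ℂ (g y) u) < 1 / ((n : ℝ) + 1) := by
          rw [eventually_all_finset]
          intro u _
          exact Metric.tendsto_nhds.1 (hw y hy u) _ hpos
        exact ev.mono fun j hj _ => hj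
      · exact Filter.Eventually.of_forall fun j hy' => absurd hy' hy
    have ev2 : ∀ᶠ j in lκ, ∀ y ∈ S, y ∈ oB →
        dist (fext (gA j y)) (H i y) < 1 / ((n : ℝ) + 1) := by
      rw [eventually_all_finset]
      intro y _
      by_cases hy : y ∈ oB
      · have ev := Metric.tendsto_nhds.1 (hfc y hy) _ hpos
        exact ev.mono fun j hj _ => hj
      · exact Filter.Eventually.of_forall fun j hy' => absurd hy' hy
    obtain ⟨j, hj1, hj2⟩ := (ev1.and ev2).exists
    exact ⟨gA j, hball j, hj1, hj2⟩
  choose k hkball hkw hkf using key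
  refine ⟨ι × (Finset ℓ2 × Finset ℓ2 × ℕ),
    l ×ˢ (atTop : Filter (Finset ℓ2 × Finset ℓ2 × ℕ)), ?_,
    fun p => k p.1 p.2.1 p.2.2.1 p.2.2.2, fun p => hkball _ _ _ _, ?_, ?_⟩
  · exact Filter.prod_neBot.2 ⟨hl, Filter.atTop_neBot⟩
  · intro y hy u
    rw [Metric.tendsto_nhds]
    intro ε hε
    obtain ⟨n₀, hn₀⟩ := hinv ε hε
    have hev : ∀ᶠ d : Finset ℓ2 × Finset ℓ2 × ℕ in atTop, ({y}, {u}, n₀) ≤ d :=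
      Filter.eventually_ge_atTop _
    refine (hev.prod_inr l).mono ?_
    rintro ⟨i, S, T, m⟩ hp
    obtain ⟨hS, hT, hm⟩ := hp
    have hyS : y ∈ S := Finset.singleton_subset_iff.1 hS
    have huT : u ∈ T := Finset.singleton_subset_iff.1 hT
    have h1 := hkw i S T m y hyS hy u huT
    have h2 : 1 / ((m : ℝ) + 1) ≤ 1 / ((n₀ : ℝ) + 1) := by
      apply one_div_le_one_div_of_le (by positivity)
      have : (n₀ : ℝ) ≤ m := by exact_mod_cast hm
      linarith
    exact lt_of_lt_of_le h1 (le_of_lt (lt_of_le_of_lt h2 hn₀))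
  · intro y hy
    rw [Metric.tendsto_nhds]
    intro ε hε
    obtain ⟨n₀, hn₀⟩ := hinv (ε / 2) (half_pos hε)
    have e1 : ∀ᶠ i in l, dist (H i y) (h y) < ε / 2 :=
      Metric.tendsto_nhds.1 (hlim y hy) _ (half_pos hε)
    have e2 : ∀ᶠ d : Finset ℓ2 × Finset ℓ2 × ℕ in atTop, ({y}, (∅ : Finset ℓ2), n₀) ≤ d :=
      Filter.eventually_ge_atTop _
    refine ((e1.prod_inl _).and (e2.prod_inr _)).mono ?_
    rintro ⟨i, S, T, m⟩ ⟨h1, hp⟩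
    obtain ⟨hS, _, hm⟩ := hp
    have hyS : y ∈ S := Finset.singleton_subset_iff.1 hS
    have h2 := hkf i S T m y hyS hy
    have h3 : 1 / ((m : ℝ) + 1) ≤ 1 / ((n₀ : ℝ) + 1) := by
      apply one_div_le_one_div_of_le (by positivity)
      have : (n₀ : ℝ) ≤ m := by exact_mod_cast hm
      linarith
    calc dist (fext (k i S T m y)) (h y)
        ≤ dist (fext (k i S T m y)) (H i y) + dist (H i y) (h y) := dist_triangle _ _ _
      _ < ε / 2 + ε / 2 := by
          apply add_lt_add _ h1
          exact lt_of_lt_of_le h2 (le_trans h3 hn₀.le)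
      _ = ε := by ring
  done

end Cluster
/-- every `h ∈ 𝒞ℓ(f,g)` satisfies `‖h‖ ≤ ‖f‖`, and `𝒞ℓ(f,g)` is closed under
pointwise limits of nets. -/
theorem stmt13 (g : ℓ2 → ℓ2) (hg : MemHinfV g) (hg1 : supNormV g ≤ 1)
    (f fext : ℓ2 → ℂ) (hf : MemAu f) (hext : IsExt f fext) :
    (∀ h, MemHinf h → InCluster fext g h → supNorm h ≤ supNorm f) ∧
    (∀ (ι : Type) (l : Filter ι), l.NeBot →
      ∀ H : ι → ℓ2 → ℂ, (∀ i, MemHinf (H i) ∧ InCluster fext g (H i)) →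
      ∀ h : ℓ2 → ℂ, (∀ y ∈ oB, Filter.Tendsto (fun i => H i y) l (nhds (h y))) →
      MemHinf h ∧ InCluster fext g h) := by
  obtain ⟨Bf, hBf⟩ := memAu_bounded hf
  constructor
  · intro h _ hcl
    exact supNorm_le
      (cluster_bound hext (fun z hz => norm_le_supNorm ⟨Bf, hBf⟩ hz) hcl)
  · intro ι l hl H hH h hlim
    have hb : ∀ i, ∀ y ∈ oB, ‖H i y‖ ≤ Bf := fun i => cluster_bound hext hBf (hH i).2
    have hd : ∀ i, DifferentiableOn ℂ (H i) oB := fun i => (hH i).1.1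
    obtain ⟨hdiff, hbd⟩ := holo_limit hl hd hb hlim
    exact ⟨⟨hdiff, Bf, hbd⟩, cluster_closed hext hl (fun i => (hH i).2) hlim⟩
end
end

section
/- Let g ∈ ℋ^∞(B_{ℓ₂},ℓ₂) with ‖g‖ < 1, let f₀ ∈ 𝒜_u(B_{ℓ₂}), let x₀ ∈ B_{ℓ₂} and set y₀ = g(x₀). Suppose f₀ is not weakly continuous at y₀, i.e. there exist ε > 0 and a net (y_α) in B_{ℓ₂} such that ⟨y_α,u⟩ → ⟨y₀,u⟩ for every u ∈ ℓ₂ and |f₀(y_α) − f₀(y₀)| > ε for every α. Then there exists an injective map Ψ : 𝔻 → ℋ^∞(B_{ℓ₂}) (where 𝔻 is the open unit disk in ℂ) such that Ψ(λ) ∈ 𝒞ℓ(f₀,g) for every λ ∈ 𝔻 and, for every x ∈ B_{ℓ₂}, the map λ ↦ Ψ(λ)(x) is holomorphic on 𝔻. -/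
open Metric Set Filter

noncomputable section

/- ===== Auxiliary lemmas for stmt14 ===== -/

section Stmt14Aux

open Metric Set Filter Topology

/-- Limit of a (bounded) family of complex numbers along an ultrafilter. -/
noncomputable def ulim {ι : Type*} (U : Ultrafilter ι) (f : ι → ℂ) : ℂ :=
  limUnder (U : Filter ι) f

lemma ulim_spec {ι : Type*} (U : Ultrafilter ι) (f : ι → ℂ) {M : ℝ}
    (hM : ∀ i, ‖f i‖ ≤ M) : Tendsto f (U : Filter ι) (𝓝 (ulim U f)) := by
  obtain ⟨a, -, ha⟩ := (isCompact_closedBall (0:ℂ) M).ultrafilter_le_nhds (U.map f)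
    (le_principal_iff.mpr (Ultrafilter.mem_map.mpr
      (Filter.univ_mem' (fun i => by simpa using hM i))))
  have ht : Tendsto f (U : Filter ι) (𝓝 a) := by
    rw [Tendsto, ← Ultrafilter.coe_map]; exact_mod_cast ha
  rwa [ulim, ht.limUnder_eq]

lemma ulim_const {ι : Type*} (U : Ultrafilter ι) (a : ℂ) : ulim U (fun _ => a) = a :=
  (tendsto_const_nhds).limUnder_eq

section SliceLemmas
variable {E : Type*} [NormedAddCommGroup E] [NormedSpace ℂ E]

lemma slice_hasDerivAt {G : E → ℂ} {y : E} {ρ : ℝ} (hρ : 0 < ρ)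
    (hdiff : DifferentiableOn ℂ G (ball y ρ)) (h : E) :
    HasDerivAt (fun t : ℂ => G (y + t • h)) (fderiv ℂ G y h) 0 := by
  have hG : DifferentiableAt ℂ G y :=
    hdiff.differentiableAt (isOpen_ball.mem_nhds (mem_ball_self hρ))
  have hline : HasDerivAt (fun t : ℂ => y + t • h) h 0 := by
    simpa using ((hasDerivAt_id (0:ℂ)).smul_const h).const_add y
  have hc : HasFDerivAt G (fderiv ℂ G y) ((fun t : ℂ => y + t • h) 0) := by
    simpa using hG.hasFDerivAt
  exact hc.comp_hasDerivAt 0 hline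

lemma slice_mapsTo {y : E} {ρ : ℝ} {h : E} (hh : h ≠ 0) {R : ℝ}
    (hR : R = ρ / ‖h‖) :
    ∀ t ∈ ball (0:ℂ) R, y + t • h ∈ ball y ρ := by
  intro t ht
  have hn : 0 < ‖h‖ := norm_pos_iff.mpr hh
  rw [mem_ball_zero_iff] at ht
  rw [mem_ball, dist_eq_norm]
  have heq : ‖y + t • h - y‖ = ‖t‖ * ‖h‖ := by
    rw [add_sub_cancel_left, norm_smul]
  rw [heq]
  calc ‖t‖ * ‖h‖ < R * ‖h‖ := by gcongr
    _ = ρ := by rw [hR]; field_simp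

lemma deriv_slice_bound {G : E → ℂ} {y : E} {ρ M : ℝ} (hρ : 0 < ρ)
    (hdiff : DifferentiableOn ℂ G (ball y ρ)) (hbd : ∀ z ∈ ball y ρ, ‖G z‖ ≤ M)
    (h : E) : ‖fderiv ℂ G y h‖ ≤ (2*M+1)/ρ * ‖h‖ := by
  have hM : 0 ≤ M := le_trans (norm_nonneg _) (hbd y (mem_ball_self hρ))
  rcases eq_or_ne h 0 with rfl | hh
  · simp
  have hn : 0 < ‖h‖ := norm_pos_iff.mpr hh
  set R := ρ / ‖h‖ with hR
  have hRpos : 0 < R := div_pos hρ hn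
  set φ : ℂ → ℂ := fun t => G (y + t • h) with hφ
  have hmaps := slice_mapsTo (y := y) (ρ := ρ) hh hR
  have hφd : DifferentiableOn ℂ φ (ball 0 R) := by
    apply hdiff.comp (f := fun t : ℂ => y + t • h)
    · exact ((differentiable_id.smul_const h).const_add y).differentiableOn
    · intro t ht; exact hmaps t ht
  have hφ0 : φ 0 = G y := by simp [hφ]
  have hφmaps : MapsTo φ (ball 0 R) (ball (φ 0) (2*M+1)) := by
    intro t ht
    rw [mem_ball]
    calc dist (φ t) (φ 0) ≤ ‖φ t‖ + ‖φ 0‖ := dist_le_norm_add_norm _ _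
      _ ≤ M + M :=
          add_le_add (hbd _ (hmaps t ht)) (by rw [hφ0]; exact hbd y (mem_ball_self hρ))
      _ < 2*M+1 := by linarith
  have hder : deriv φ 0 = fderiv ℂ G y h := (slice_hasDerivAt hρ hdiff h).deriv
  have hS := Complex.norm_deriv_le_div_of_mapsTo_ball hφd (hφmaps.mono_right ball_subset_closedBall) hRpos
  rw [hder] at hS
  calc ‖fderiv ℂ G y h‖ ≤ (2*M+1)/R := hS
    _ = (2*M+1)/ρ * ‖h‖ := by rw [hR, div_div_eq_mul_div]; ring

lemma quad_slice_bound {G : E → ℂ} {y : E} {ρ M : ℝ} (hρ : 0 < ρ)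
    (hdiff : DifferentiableOn ℂ G (ball y ρ)) (hbd : ∀ z ∈ ball y ρ, ‖G z‖ ≤ M)
    {h : E} (hh : ‖h‖ < ρ/2) :
    ‖G (y + h) - G y - fderiv ℂ G y h‖ ≤ (4*M+2)/ρ^2 * ‖h‖^2 := by
  have hM : 0 ≤ M := le_trans (norm_nonneg _) (hbd y (mem_ball_self hρ))
  rcases eq_or_ne h 0 with rfl | hne
  · simp
  have hn : 0 < ‖h‖ := norm_pos_iff.mpr hne
  set R := ρ / ‖h‖ with hR
  have hRpos : 0 < R := div_pos hρ hn
  have hR2 : 2 < R := by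
    rw [hR, lt_div_iff₀ hn]; linarith
  set φ : ℂ → ℂ := fun t => G (y + t • h) with hφ
  have hmaps := slice_mapsTo (y := y) (ρ := ρ) hne hR
  have hφd : DifferentiableOn ℂ φ (ball 0 R) := by
    apply hdiff.comp (f := fun t : ℂ => y + t • h)
    · exact ((differentiable_id.smul_const h).const_add y).differentiableOn
    · intro t ht; exact hmaps t ht
  have hφ0 : φ 0 = G y := by simp [hφ]
  have hφmaps : MapsTo φ (ball 0 R) (ball (φ 0) (2*M+1)) := by
    intro t ht
    rw [mem_ball]
    calc dist (φ t) (φ 0) ≤ ‖φ t‖ + ‖φ 0‖ := dist_le_norm_add_norm _ _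
      _ ≤ M + M :=
          add_le_add (hbd _ (hmaps t ht)) (by rw [hφ0]; exact hbd y (mem_ball_self hρ))
      _ < 2*M+1 := by linarith
  set ψ : ℂ → ℂ := dslope φ 0 with hψ
  have h0mem : (0:ℂ) ∈ ball (0:ℂ) R := mem_ball_self hRpos
  have hψbd : ∀ t ∈ ball (0:ℂ) R, ‖ψ t‖ ≤ (2*M+1)/R := fun t ht =>
    Complex.norm_dslope_le_div_of_mapsTo_ball hφd (hφmaps.mono_right ball_subset_closedBall) ht
  have hψd : DifferentiableOn ℂ ψ (ball 0 R) := by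
    intro z hz
    rcases eq_or_ne z 0 with rfl | hz0
    · obtain ⟨p, hp⟩ := (hφd.analyticOnNhd isOpen_ball) 0 h0mem
      exact hp.has_fpower_series_dslope_fslope.analyticAt.differentiableAt.differentiableWithinAt
    · exact (differentiableWithinAt_dslope_of_ne hz0).mpr (hφd z hz)
  have key : dist (ψ 1) (ψ 0) ≤ 2*((2*M+1)/R)/R := by
    apply le_of_forall_pos_le_add
    intro η hη
    have hψmaps : MapsTo ψ (ball 0 R) (ball (ψ 0) (2*((2*M+1)/R) + η*R)) := by
      intro t ht
      rw [mem_ball]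
      calc dist (ψ t) (ψ 0) ≤ ‖ψ t‖ + ‖ψ 0‖ := dist_le_norm_add_norm _ _
        _ ≤ (2*M+1)/R + (2*M+1)/R := add_le_add (hψbd t ht) (hψbd 0 h0mem)
        _ < 2*((2*M+1)/R) + η*R := by nlinarith [mul_pos hη hRpos]
    have h1mem : (1:ℂ) ∈ ball (0:ℂ) R := by
      rw [mem_ball_zero_iff]; simpa using by linarith
    have hS := Complex.dist_le_div_mul_dist_of_mapsTo_ball hψd (hψmaps.mono_right ball_subset_closedBall) h1mem
    have hd10 : dist (1:ℂ) 0 = 1 := by simp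
    rw [hd10, mul_one] at hS
    calc dist (ψ 1) (ψ 0) ≤ (2*((2*M+1)/R) + η*R)/R := hS
      _ = 2*((2*M+1)/R)/R + η := by field_simp
  have hψ1 : ψ 1 = φ 1 - φ 0 := by
    rw [hψ, dslope_of_ne _ (by norm_num : (1:ℂ) ≠ 0), slope_def_field]
    field_simp
    ring
  have hψ0 : ψ 0 = fderiv ℂ G y h := by
    rw [hψ, dslope_same]
    exact (slice_hasDerivAt hρ hdiff h).deriv
  have hφ1 : φ 1 = G (y + h) := by simp [hφ]
  rw [dist_eq_norm, hψ1, hψ0, hφ1, hφ0] at key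
  calc ‖G (y + h) - G y - fderiv ℂ G y h‖ ≤ 2*((2*M+1)/R)/R := key
    _ = (4*M+2)/ρ^2 * ‖h‖^2 := by rw [hR]; field_simp; ring

lemma keyHolo {ι : Type*} (U : Ultrafilter ι) {W : Set E} (hW : IsOpen W)
    {F : ι → E → ℂ} {M : ℝ}
    (hdiff : ∀ i, DifferentiableOn ℂ (F i) W)
    (hbd : ∀ i, ∀ y ∈ W, ‖F i y‖ ≤ M)
    {Ψ : E → ℂ}
    (hlim : ∀ y ∈ W, Tendsto (fun i => F i y) (U : Filter ι) (𝓝 (Ψ y))) :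
    DifferentiableOn ℂ Ψ W := by
  intro y hy
  obtain ⟨ρ, hρpos, hρsub⟩ := Metric.isOpen_iff.mp hW y hy
  have hM : 0 ≤ M := by
    obtain ⟨i⟩ := (U : Filter ι).nonempty_of_neBot
    exact le_trans (norm_nonneg _) (hbd i y hy)
  have hdiffB : ∀ i, DifferentiableOn ℂ (F i) (ball y ρ) := fun i => (hdiff i).mono hρsub
  have hbdB : ∀ i, ∀ z ∈ ball y ρ, ‖F i z‖ ≤ M := fun i z hz => hbd i z (hρsub hz)
  have hDbd : ∀ (h : E) i, ‖fderiv ℂ (F i) y h‖ ≤ (2*M+1)/ρ * ‖h‖ := fun h i =>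
    deriv_slice_bound hρpos (hdiffB i) (hbdB i) h
  set L0 : E → ℂ := fun h => ulim U (fun i => fderiv ℂ (F i) y h) with hL0
  have hLt : ∀ h : E, Tendsto (fun i => fderiv ℂ (F i) y h) (U : Filter ι) (𝓝 (L0 h)) :=
    fun h => ulim_spec U _ (fun i => hDbd h i)
  have hadd : ∀ a b : E, L0 (a + b) = L0 a + L0 b := by
    intro a b
    have h1 : Tendsto (fun i => fderiv ℂ (F i) y (a + b)) (U : Filter ι) (𝓝 (L0 a + L0 b)) := by
      have := (hLt a).add (hLt b)
      simpa using this
    exact tendsto_nhds_unique (hLt (a+b)) h1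
  have hsmul : ∀ (z : ℂ) (a : E), L0 (z • a) = z • L0 a := by
    intro z a
    have h1 : Tendsto (fun i => fderiv ℂ (F i) y (z • a)) (U : Filter ι) (𝓝 (z • L0 a)) := by
      have := (hLt a).const_smul z
      simpa using this
    exact tendsto_nhds_unique (hLt (z • a)) h1
  set Llin : E →ₗ[ℂ] ℂ := { toFun := L0, map_add' := hadd, map_smul' := hsmul } with hLlin
  have hLbd : ∀ h : E, ‖Llin h‖ ≤ (2*M+1)/ρ * ‖h‖ := by
    intro h
    exact le_of_tendsto (hLt h).norm (Filter.Eventually.of_forall (fun i => hDbd h i))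
  set L : E →L[ℂ] ℂ := LinearMap.mkContinuous Llin ((2*M+1)/ρ) hLbd with hL
  have hFd : HasFDerivAt Ψ L y := by
    rw [hasFDerivAt_iff_isLittleO_nhds_zero]
    rw [Asymptotics.isLittleO_iff]
    intro ε hε
    have hC : (0:ℝ) < (4*M+2)/ρ^2 := by positivity
    rw [Metric.eventually_nhds_iff]
    refine ⟨min (ρ/2) (ε / ((4*M+2)/ρ^2)), by positivity, ?_⟩
    intro h hdist
    rw [dist_zero_right] at hdist
    have hh2 : ‖h‖ < ρ/2 := lt_of_lt_of_le hdist (min_le_left _ _)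
    have hhε : ‖h‖ ≤ ε / ((4*M+2)/ρ^2) := le_of_lt (lt_of_lt_of_le hdist (min_le_right _ _))
    have hmem : y + h ∈ W := hρsub (by
      rw [mem_ball, dist_eq_norm, add_sub_cancel_left]; linarith)
    have hq : ∀ i, ‖F i (y + h) - F i y - fderiv ℂ (F i) y h‖ ≤ (4*M+2)/ρ^2 * ‖h‖^2 :=
      fun i => quad_slice_bound hρpos (hdiffB i) (hbdB i) hh2
    have htend : Tendsto (fun i => F i (y + h) - F i y - fderiv ℂ (F i) y h) (U : Filter ι)
        (𝓝 (Ψ (y + h) - Ψ y - L h)) := ((hlim _ hmem).sub (hlim y hy)).sub (hLt h)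
    have hlim2 : ‖Ψ (y + h) - Ψ y - L h‖ ≤ (4*M+2)/ρ^2 * ‖h‖^2 :=
      le_of_tendsto htend.norm (Filter.Eventually.of_forall hq)
    calc ‖Ψ (y + h) - Ψ y - L h‖ ≤ (4*M+2)/ρ^2 * ‖h‖^2 := hlim2
      _ = ((4*M+2)/ρ^2 * ‖h‖) * ‖h‖ := by ring
      _ ≤ ε * ‖h‖ := by
          have h2 : (4*M+2)/ρ^2 * ‖h‖ ≤ ε := by
            calc (4*M+2)/ρ^2 * ‖h‖ ≤ (4*M+2)/ρ^2 * (ε / ((4*M+2)/ρ^2)) := by gcongr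
              _ = ε := by field_simp
          gcongr
  exact hFd.differentiableAt.differentiableWithinAt

end SliceLemmas

lemma exists_inj_ball {Ω : Set ℂ} (hΩo : IsOpen Ω) (hΩc : IsPreconnected Ω)
    (hball : ball (0:ℂ) 1 ⊆ Ω) {p : ℂ} (hp : p ∈ Ω)
    {φ : ℂ → ℂ} (hφ : DifferentiableOn ℂ φ Ω) (hne : φ p ≠ φ 0) :
    ∃ μ r, 0 < r ∧ ball μ r ⊆ ball (0:ℂ) 1 ∧ Set.InjOn φ (ball μ r) := by
  have h0 : (0:ℂ) ∈ ball (0:ℂ) 1 := by simp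
  have hφa : AnalyticOnNhd ℂ φ Ω := hφ.analyticOnNhd hΩo
  have hder : ∃ μ₀ ∈ ball (0:ℂ) 1, deriv φ μ₀ ≠ 0 := by
    by_contra hcon
    push_neg at hcon
    have hconst : ∀ z ∈ ball (0:ℂ) 1, φ z = φ 0 := by
      intro z hz
      apply (convex_ball (0:ℂ) 1).is_const_of_fderivWithin_eq_zero
        (hφ.mono hball) _ hz h0
      intro x hx
      rw [fderivWithin_of_isOpen isOpen_ball hx]
      apply ContinuousLinearMap.ext_ring
      rw [ContinuousLinearMap.zero_apply, fderiv_apply_one_eq_deriv, hcon x hx]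
    have hEq : EqOn φ (fun _ => φ 0) Ω := by
      apply hφa.eqOn_of_preconnected_of_eventuallyEq
        (analyticOnNhd_const) hΩc (hball h0)
      filter_upwards [isOpen_ball.mem_nhds h0] with z hz using hconst z hz
    exact hne (by rw [hEq hp, hEq (hball h0)])
  obtain ⟨μ₀, hμ₀, hd0⟩ := hder
  set d := deriv φ μ₀ with hdd
  obtain ⟨q, hq⟩ := hφa μ₀ (hball hμ₀)
  have hstrict : HasStrictDerivAt φ d μ₀ := by
    have := hq.hasStrictDerivAt
    rwa [← hq.deriv] at this
  have hlo := (hasStrictDerivAt_iff_hasStrictFDerivAt.mp hstrict).isLittleO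
  rw [Asymptotics.isLittleO_iff] at hlo
  have hd2 : 0 < ‖d‖ / 2 := by
    have : 0 < ‖d‖ := norm_pos_iff.mpr hd0
    linarith
  have hev := hlo hd2
  rw [Metric.eventually_nhds_iff] at hev
  obtain ⟨r₀, hr₀, hball2⟩ := hev
  have h1μ : 0 < 1 - ‖μ₀‖ := by
    rw [mem_ball_zero_iff] at hμ₀; linarith
  refine ⟨μ₀, min (r₀/2) (1 - ‖μ₀‖), by positivity, ?_, ?_⟩
  · intro z hz
    rw [mem_ball] at hz
    rw [mem_ball_zero_iff]
    calc ‖z‖ ≤ ‖z - μ₀‖ + ‖μ₀‖ := by simpa using norm_add_le (z - μ₀) μ₀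
      _ < (1 - ‖μ₀‖) + ‖μ₀‖ := by
          have hlt : dist z μ₀ < 1 - ‖μ₀‖ := lt_of_lt_of_le hz (min_le_right _ _)
          rw [dist_eq_norm] at hlt; linarith
      _ = 1 := by ring
  · intro x hx y hy hxy
    have hEx : dist (x, y) (μ₀, μ₀) < r₀ := by
      rw [Prod.dist_eq]
      rw [mem_ball] at hx hy
      apply max_lt
      · exact lt_of_lt_of_le hx (le_trans (min_le_left _ _) (by linarith))
      · exact lt_of_lt_of_le hy (le_trans (min_le_left _ _) (by linarith))
    have hkey := hball2 hEx
    simp only at hkey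
    rw [hxy] at hkey
    have hle : ‖(ContinuousLinearMap.smulRight (1 : ℂ →L[ℂ] ℂ) d) (x - y)‖ ≤ ‖d‖/2 * ‖x - y‖ := by
      calc ‖(ContinuousLinearMap.smulRight (1 : ℂ →L[ℂ] ℂ) d) (x - y)‖
          = ‖φ y - φ y - (ContinuousLinearMap.smulRight (1 : ℂ →L[ℂ] ℂ) d) (x - y)‖ := by
            rw [sub_self]; simp [norm_neg]
        _ ≤ ‖d‖/2 * ‖x - y‖ := hkey
    have heq : ‖(ContinuousLinearMap.smulRight (1 : ℂ →L[ℂ] ℂ) d) (x - y)‖ = ‖x - y‖ * ‖d‖ := by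
      simp [ContinuousLinearMap.smulRight_apply, norm_smul]
    rw [heq] at hle
    by_contra hne2
    have hpos : 0 < ‖x - y‖ := by
      rw [norm_pos_iff, sub_ne_zero]; exact hne2
    have hdpos : 0 < ‖d‖ := norm_pos_iff.mpr hd0
    nlinarith

lemma bounded_of_uc {E : Type*} [NormedAddCommGroup E] [NormedSpace ℝ E] {f : E → ℂ}
    (hf : UniformContinuousOn f (ball 0 1)) :
    ∃ M : ℝ, 0 ≤ M ∧ ∀ w ∈ ball (0:E) 1, ‖f w‖ ≤ M := by
  obtain ⟨δ, hδpos, hδ⟩ := Metric.uniformContinuousOn_iff.mp hf 1 one_pos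
  set N : ℕ := ⌈1/δ⌉₊ + 1 with hN
  have hNpos : 0 < (N:ℝ) := by positivity
  have hNδ : 1/(N:ℝ) < δ := by
    rw [div_lt_iff₀ hNpos]
    have h1 : 1/δ < (N:ℝ) := by
      have := Nat.le_ceil (1/δ)
      push_cast [hN]
      linarith
    calc (1:ℝ) = δ * (1/δ) := by field_simp
      _ < δ * N := by gcongr
  refine ⟨‖f 0‖ + N, by positivity, ?_⟩
  intro w hw
  rw [mem_ball_zero_iff] at hw
  have hmem : ∀ k : ℕ, k ≤ N → ((k:ℝ)/N) • w ∈ ball (0:E) 1 := by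
    intro k hk
    rw [mem_ball_zero_iff, norm_smul]
    have h1 : ‖((k:ℝ)/N : ℝ)‖ ≤ 1 := by
      rw [Real.norm_eq_abs, abs_of_nonneg (by positivity)]
      rw [div_le_one hNpos]
      exact_mod_cast hk
    calc ‖((k:ℝ)/N : ℝ)‖ * ‖w‖ ≤ 1 * ‖w‖ := by gcongr
      _ < 1 := by rwa [one_mul]
  have key : ∀ j : ℕ, j ≤ N → ‖f (((j:ℝ)/N) • w)‖ ≤ ‖f 0‖ + j := by
    intro j
    induction j with
    | zero => intro _; simp
    | succ j ih =>
      intro hj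
      have hjN : j ≤ N := by omega
      have hprev := ih hjN
      have ha := hmem j hjN
      have hb' := hmem (j+1) hj
      have hcast : ((j+1 : ℕ) : ℝ) = (j:ℝ) + 1 := by push_cast; ring
      rw [hcast] at hb'
      have hdist : dist (((j:ℝ)/N) • w) ((((j:ℝ)+1)/N) • w) < δ := by
        rw [dist_eq_norm, ← sub_smul, norm_smul]
        have heq : (j:ℝ)/N - ((j:ℝ)+1)/N = -(1/N) := by ring
        rw [heq]
        calc ‖(-(1/(N:ℝ)))‖ * ‖w‖ ≤ (1/N) * 1 := by
              rw [norm_neg, Real.norm_eq_abs, abs_of_nonneg (by positivity)]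
              gcongr
            _ < δ := by rwa [mul_one]
      have hfd := hδ _ ha _ hb' hdist
      rw [dist_eq_norm] at hfd
      have hrev := norm_sub_rev (f (((j:ℝ)/N) • w)) (f ((((j:ℝ)+1)/N) • w))
      have h1 := norm_sub_norm_le (f ((((j:ℝ)+1)/N) • w)) (f (((j:ℝ)/N) • w))
      rw [hcast]
      linarith
  have hfin := key N le_rfl
  have hNN : ((N:ℝ)/N) • w = w := by
    rw [div_self (ne_of_gt hNpos), one_smul]
  rwa [hNN] at hfin

end Stmt14Aux

open Topology

set_option maxHeartbeats 1600000

/-- if `‖g‖ < 1` and `f₀ ∈ 𝒜ᵤ(B)` is not weakly continuous at `y₀ = g(x₀)`,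
then the cluster set `𝒞ℓ(f₀,g)` contains an analytic copy of the complex disk `𝔻`. -/
theorem stmt14 (g : ℓ2 → ℓ2) (hg : MemHinfV g) (hglt : supNormV g < 1)
    (f₀ fext : ℓ2 → ℂ) (hf : MemAu f₀) (hext : IsExt f₀ fext)
    (x₀ : ℓ2) (hx₀ : x₀ ∈ oB)
    -- f₀ is not weakly continuous at y₀ = g(x₀): a witnessing net
    (ε : ℝ) (hε : 0 < ε)
    (ι : Type) (l : Filter ι) (hl : l.NeBot) (yα : ι → ℓ2)
    (hyB : ∀ i, yα i ∈ oB)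
    (hweak : ∀ u : ℓ2,
      Filter.Tendsto (fun i => (inner ℂ (yα i) u : ℂ)) l (nhds (inner ℂ (g x₀) u)))
    (hsep : ∀ i, ε < ‖f₀ (yα i) - f₀ (g x₀)‖) :
    ∃ Ψ : ℂ → ℓ2 → ℂ,
      -- injectivity (elements of ℋ^∞(B) identified on B)
      (∀ lam₁ ∈ Metric.ball (0 : ℂ) 1, ∀ lam₂ ∈ Metric.ball (0 : ℂ) 1,
        Set.EqOn (Ψ lam₁) (Ψ lam₂) oB → lam₁ = lam₂) ∧
      -- the image is contained in the cluster set 𝒞ℓ(f₀,g)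
      (∀ lam ∈ Metric.ball (0 : ℂ) 1, MemHinf (Ψ lam) ∧ InCluster fext g (Ψ lam)) ∧
      -- analyticity: for every x ∈ B, λ ↦ Ψ(λ)(x) is holomorphic on 𝔻
      (∀ x ∈ oB, DifferentiableOn ℂ (fun lam => Ψ lam x) (Metric.ball (0 : ℂ) 1)) := by
  classical
  haveI : l.NeBot := hl
  have hoBiff : ∀ z : ℓ2, z ∈ oB ↔ ‖z‖ < 1 := fun z => mem_ball_zero_iff
  have hoB0 : (0:ℓ2) ∈ oB := (hoBiff 0).mpr (by simp)
  haveI hoBne : Nonempty ↥oB := ⟨⟨0, hoB0⟩⟩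
  have hoBopen : IsOpen oB := isOpen_ball
  obtain ⟨Cg, hCg⟩ := hg.2
  have hbddg : BddAbove (Set.range (fun x : ↥oB => ‖g (x:ℓ2)‖)) := by
    refine ⟨Cg, ?_⟩
    rintro _ ⟨x, rfl⟩
    exact hCg x x.2
  set s : ℝ := supNormV g with hsdef
  have hgle : ∀ y ∈ oB, ‖g y‖ ≤ s := by
    intro y hy
    exact le_ciSup hbddg (⟨y, hy⟩ : ↥oB)
  have hs0 : 0 ≤ s := le_trans (norm_nonneg _) (hgle 0 hoB0)
  have hs1 : s < 1 := hglt
  obtain ⟨M, hM0, hMb'⟩ := bounded_of_uc (E := ℓ2) (f := f₀) hf.2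
  have hMb : ∀ w ∈ oB, ‖f₀ w‖ ≤ M := hMb'
  obtain ⟨U, hUl⟩ := Filter.exists_ultrafilter_le l
  obtain ⟨δ₀, hδ₀pos, hδ₀⟩ := Metric.uniformContinuousOn_iff.mp hf.2 (ε/8) (by linarith)
  set dh : ℝ := min (δ₀/2) (1/2) with hdhdef
  have hdhpos : 0 < dh := lt_min (by linarith) (by norm_num)
  have hdh1 : dh ≤ 1/2 := min_le_right _ _
  have hdhδ : dh < δ₀ := lt_of_le_of_lt (min_le_left _ _) (by linarith)
  set c : ℝ := (1-s)/4 with hcdef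
  have hcpos : 0 < c := by rw [hcdef]; linarith
  set cC : ℂ := ((c:ℝ) : ℂ) with hcCdef
  have hcCnorm : ‖cC‖ = c := by
    rw [hcCdef, Complex.norm_real, Real.norm_eq_abs, abs_of_pos hcpos]
  set κ : ℂ := ((1 - dh : ℝ) : ℂ) with hκdef
  have hκnorm : ‖κ‖ = 1 - dh := by
    rw [hκdef, Complex.norm_real, Real.norm_eq_abs, abs_of_pos (by linarith)]
  set v : ι → ℓ2 := fun i => κ • (yα i - g x₀) with hvdef
  have hvi : ∀ i, v i = κ • (yα i - g x₀) := fun i => rfl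
  have hyαn : ∀ i, ‖yα i‖ < 1 := fun i => (hoBiff _).mp (hyB i)
  have hgx₀ : ‖g x₀‖ ≤ s := hgle x₀ hx₀
  have hvn : ∀ i, ‖v i‖ ≤ 2 := by
    intro i
    rw [hvi i, norm_smul, hκnorm]
    have h1 : ‖yα i - g x₀‖ ≤ ‖yα i‖ + ‖g x₀‖ := norm_sub_le _ _
    have h2 : ‖yα i - g x₀‖ ≤ 2 := by linarith [hyαn i, hgx₀, hs1]
    calc (1-dh) * ‖yα i - g x₀‖ ≤ 1 * ‖yα i - g x₀‖ :=
          mul_le_mul_of_nonneg_right (by linarith) (norm_nonneg _)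
      _ ≤ 2 := by linarith
  -- (E1) uniform estimate on the unit disk of parameters
  have hE1 : ∀ w : ℂ, ∀ x ∈ oB, ∀ i, ‖g x + (w * cC) • v i‖ ≤ s + ‖w‖ * ((1-s)/2) := by
    intro w x hx i
    calc ‖g x + (w * cC) • v i‖ ≤ ‖g x‖ + ‖(w * cC) • v i‖ := norm_add_le _ _
      _ ≤ s + ‖w‖ * ((1-s)/2) := by
          have h2 : ‖(w * cC) • v i‖ = ‖w‖ * c * ‖v i‖ := by
            rw [norm_smul, norm_mul, hcCnorm]
          rw [h2]
          have h3 := hvn i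
          have h4 := hgle x hx
          have h5 := norm_nonneg w
          have h7 : 0 ≤ ‖w‖ * c := mul_nonneg h5 hcpos.le
          have h8 : ‖w‖ * c * ‖v i‖ ≤ ‖w‖ * c * 2 := mul_le_mul_of_nonneg_left h3 h7
          have h9 : ‖w‖ * c * 2 = ‖w‖ * ((1-s)/2) := by rw [hcdef]; ring
          linarith
  have hE1mem : ∀ w : ℂ, ‖w‖ < 1 → ∀ x ∈ oB, ∀ i, g x + (w * cC) • v i ∈ oB := by
    intro w hw x hx i
    rw [hoBiff]
    have h1 := hE1 w x hx i
    have h2 : ‖w‖ * ((1-s)/2) < 1 * ((1-s)/2) := by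
      apply mul_lt_mul_of_pos_right hw
      linarith
    linarith
  -- the lens region S around the segment [0, 1/c]
  set τ : ℝ := dh/2 with hτdef
  have hτpos : 0 < τ := by rw [hτdef]; linarith
  set S : Set ℂ := Complex.re ⁻¹' (Set.Ioo (-τ) (1/c + τ)) ∩
      Complex.im ⁻¹' (Set.Ioo (-τ) τ) with hSdef
  have hSopen : IsOpen S :=
    ((isOpen_Ioo).preimage Complex.continuous_re).inter
      ((isOpen_Ioo).preimage Complex.continuous_im)
  have hSconv : Convex ℝ S := by
    apply Convex.inter
    · have h := (convex_Ioo (-τ) (1/c + τ)).linear_preimage Complex.reLm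
      simpa [Complex.reLm_coe] using h
    · have h := (convex_Ioo (-τ) τ).linear_preimage Complex.imLm
      simpa [Complex.imLm_coe] using h
  have h0S : (0:ℂ) ∈ S := by
    constructor
    · simp only [Set.mem_preimage, Complex.zero_re, Set.mem_Ioo]
      constructor
      · linarith
      · positivity
    · simp only [Set.mem_preimage, Complex.zero_im, Set.mem_Ioo]
      constructor <;> linarith
  -- (E2) estimate on the lens, at the point x₀
  have hE2 : ∀ w ∈ S, ∀ i, ‖g x₀ + (w * cC) • v i‖ ≤ 1 - dh*(1-s)/2 := by
    intro w hw i
    obtain ⟨hwre, hwim⟩ := hw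
    rw [Set.mem_preimage, Set.mem_Ioo] at hwre hwim
    set t : ℝ := max 0 (min (w.re * c) 1) with htdef
    have ht0 : 0 ≤ t := le_max_left _ _
    have ht1 : t ≤ 1 := max_le (by norm_num) (min_le_right _ _)
    have habs1 : |w.re * c - t| ≤ c * τ := by
      rcases le_total (w.re * c) 0 with h|h
      · have htt : t = 0 := by
          rw [htdef, max_eq_left (le_trans (min_le_left _ _) h)]
        rw [htt, sub_zero, abs_of_nonpos h]
        have h8 : (-τ) * c ≤ w.re * c := mul_le_mul_of_nonneg_right hwre.1.le hcpos.le
        linarith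
      · rcases le_total 1 (w.re * c) with h2|h2
        · have htt : t = 1 := by
            rw [htdef, min_eq_right h2, max_eq_right (by norm_num : (0:ℝ) ≤ 1)]
          rw [htt, abs_of_nonneg (by linarith)]
          have h3 : w.re < 1/c + τ := hwre.2
          have h4 : w.re * c < (1/c + τ) * c := mul_lt_mul_of_pos_right h3 hcpos
          have h5 : (1/c + τ) * c = 1 + τ * c := by field_simp
          linarith
        · have htt : t = w.re * c := by
            rw [htdef, min_eq_left h2, max_eq_right h]
          rw [htt, sub_self, abs_zero]
          positivity
    have habs2 : |w.im * c| ≤ c * τ := by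
      rw [abs_mul, abs_of_pos hcpos]
      have h1 : |w.im| ≤ τ := by
        rw [abs_le]
        exact ⟨by linarith [hwim.1], by linarith [hwim.2]⟩
      have h2 : |w.im| * c ≤ τ * c := mul_le_mul_of_nonneg_right h1 hcpos.le
      linarith
    have hwt : ‖w * cC - ((t:ℝ):ℂ)‖ ≤ 2 * (c * τ) := by
      have hre : (w * cC - ((t:ℝ):ℂ)).re = w.re * c - t := by
        simp [hcCdef, Complex.mul_re]
      have him : (w * cC - ((t:ℝ):ℂ)).im = w.im * c := by
        simp [hcCdef, Complex.mul_im]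
      calc ‖w * cC - ((t:ℝ):ℂ)‖ ≤ |(w * cC - ((t:ℝ):ℂ)).re| + |(w * cC - ((t:ℝ):ℂ)).im| :=
            Complex.norm_le_abs_re_add_abs_im _
        _ ≤ 2 * (c * τ) := by rw [hre, him]; linarith
    have hcoef : (1:ℂ) - ((t:ℝ):ℂ) * κ = (((1 - t*(1-dh)) : ℝ) : ℂ) := by
      rw [hκdef]; push_cast; ring
    have hcoef2 : ((t:ℝ):ℂ) * κ = (((t*(1-dh)) : ℝ) : ℂ) := by
      rw [hκdef]; push_cast; ring
    have hpt : g x₀ + ((t:ℝ):ℂ) • v i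
        = ((1:ℂ) - ((t:ℝ):ℂ) * κ) • g x₀ + (((t:ℝ):ℂ) * κ) • yα i := by
      rw [hvi i]; module
    have hta0 : 0 ≤ t*(1-dh) := mul_nonneg ht0 (by linarith)
    have hta1 : t*(1-dh) ≤ 1 := by
      have h9 : t*(1-dh) ≤ 1*(1-dh) := mul_le_mul_of_nonneg_right ht1 (by linarith)
      linarith
    have hta2 : t*(1-dh) ≤ 1-dh := by
      have h9 : t*(1-dh) ≤ 1*(1-dh) := mul_le_mul_of_nonneg_right ht1 (by linarith)
      linarith
    have hptn : ‖g x₀ + ((t:ℝ):ℂ) • v i‖ ≤ 1 - dh*(1-s) := by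
      rw [hpt]
      have hb1 : ‖((1:ℂ) - ((t:ℝ):ℂ) * κ) • g x₀‖ ≤ (1 - t*(1-dh)) * s := by
        rw [norm_smul, hcoef, Complex.norm_real, Real.norm_eq_abs,
          abs_of_nonneg (by linarith)]
        exact mul_le_mul_of_nonneg_left hgx₀ (by linarith)
      have hb2 : ‖(((t:ℝ):ℂ) * κ) • yα i‖ ≤ t*(1-dh) := by
        rw [norm_smul, hcoef2, Complex.norm_real, Real.norm_eq_abs,
          abs_of_nonneg (by linarith)]
        have h9 : t*(1-dh) * ‖yα i‖ ≤ t*(1-dh) * 1 :=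
          mul_le_mul_of_nonneg_left (hyαn i).le hta0
        linarith
      have h10 : (t*(1-dh))*(1-s) ≤ (1-dh)*(1-s) :=
        mul_le_mul_of_nonneg_right hta2 (by linarith)
      calc ‖_ + _‖ ≤ _ + _ := norm_add_le _ _
        _ ≤ (1 - t*(1-dh)) * s + t*(1-dh) := add_le_add hb1 hb2
        _ ≤ 1 - dh*(1-s) := by linarith [h10]
    have hsplit : g x₀ + (w * cC) • v i
        = (g x₀ + ((t:ℝ):ℂ) • v i) + (w * cC - ((t:ℝ):ℂ)) • v i := by
      module
    rw [hsplit]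
    have hlast : ‖(w * cC - ((t:ℝ):ℂ)) • v i‖ ≤ 2 * (c * τ) * 2 := by
      rw [norm_smul]
      exact mul_le_mul hwt (hvn i) (norm_nonneg _)
        (mul_nonneg (by norm_num) (mul_nonneg hcpos.le hτpos.le))
    calc ‖_ + _‖ ≤ _ + _ := norm_add_le _ _
      _ ≤ (1 - dh*(1-s)) + 2 * (c * τ) * 2 := add_le_add hptn hlast
      _ ≤ 1 - dh*(1-s)/2 := by
          have heq2 : 2 * (c * τ) * 2 = dh*(1-s)/2 := by rw [hcdef, hτdef]; ring
          linarith
  have hE2mem : ∀ w ∈ S, ∀ i, g x₀ + (w * cC) • v i ∈ oB := by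
    intro w hw i
    rw [hoBiff]
    have h1 := hE2 w hw i
    have h2 : 0 < dh*(1-s)/2 := by
      have : 0 < dh*(1-s) := mul_pos hdhpos (by linarith)
      linarith
    linarith
  -- the parameter domain Ω
  set Ω : Set ℂ := Metric.ball (0:ℂ) 1 ∪ S with hΩdef
  have hΩopen : IsOpen Ω := isOpen_ball.union hSopen
  have hΩpre : IsPreconnected Ω :=
    IsPreconnected.union 0 (by simp) h0S (convex_ball _ _).isPreconnected
      hSconv.isPreconnected
  have hΩmem : ∀ w ∈ Ω, ∀ i, g x₀ + (w * cC) • v i ∈ oB := by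
    intro w hw i
    rcases hw with hw | hw
    · exact hE1mem w (mem_ball_zero_iff.mp hw) x₀ hx₀ i
    · exact hE2mem w hw i
  -- the limit functions
  set Q : ℂ → ℓ2 → ℂ := fun w x => ulim U (fun i => f₀ (g x + (w * cC) • v i)) with hQdef
  have hQten : ∀ (w : ℂ) (x : ℓ2), (∀ i, g x + (w * cC) • v i ∈ oB) →
      Filter.Tendsto (fun i => f₀ (g x + (w * cC) • v i)) (U : Filter ι) (𝓝 (Q w x)) :=
    fun w x hmem => ulim_spec U _ (fun i => hMb _ (hmem i))
  have haff : ∀ (x : ℓ2) i, Differentiable ℂ (fun w : ℂ => g x + (w * cC) • v i) :=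
    fun x i => ((differentiable_id.mul_const cC).smul_const (v i)).const_add (g x)
  have hφd : DifferentiableOn ℂ (fun w => Q w x₀) Ω := by
    apply keyHolo U hΩopen (F := fun i w => f₀ (g x₀ + (w * cC) • v i)) (M := M)
    · intro i
      exact hf.1.comp ((haff x₀ i).differentiableOn) (fun w hw => hΩmem w hw i)
    · intro i w hw
      exact hMb _ (hΩmem w hw i)
    · intro w hw
      exact hQten w x₀ (hΩmem w hw)
  have hQ0 : Q 0 x₀ = f₀ (g x₀) := by
    have hfun : (fun i => f₀ (g x₀ + ((0:ℂ) * cC) • v i)) = fun _ => f₀ (g x₀) := by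
      funext i; simp
    show ulim U (fun i => f₀ (g x₀ + ((0:ℂ) * cC) • v i)) = f₀ (g x₀)
    rw [hfun, ulim_const]
  -- the distinguished boundary-ish point p = 1/c
  set p : ℂ := ((1/c : ℝ) : ℂ) with hpdef
  have hpS : p ∈ S := by
    constructor
    · simp only [Set.mem_preimage, hpdef, Complex.ofReal_re, Set.mem_Ioo]
      constructor
      · have : 0 < 1/c := by positivity
        linarith
      · linarith
    · simp only [Set.mem_preimage, hpdef, Complex.ofReal_im, Set.mem_Ioo]
      constructor <;> linarith
  have hpc : p * cC = 1 := by
    rw [hpdef, hcCdef, ← Complex.ofReal_mul, one_div, inv_mul_cancel₀ (ne_of_gt hcpos),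
      Complex.ofReal_one]
  have hsep2 : ∀ i, ε * (3/4) ≤ ‖f₀ (g x₀ + (p * cC) • v i) - f₀ (g x₀)‖ := by
    intro i
    have hpt1 : g x₀ + (p * cC) • v i = g x₀ + v i := by rw [hpc, one_smul]
    rw [hpt1]
    have hidA : g x₀ + v i = κ • yα i + ((1:ℂ) - κ) • g x₀ := by
      rw [hvi i]; module
    have hκ1 : (1:ℂ) - κ = ((dh:ℝ):ℂ) := by rw [hκdef]; push_cast; ring
    have hAn : ‖g x₀ + v i‖ < 1 := by
      rw [hidA]
      calc ‖κ • yα i + ((1:ℂ) - κ) • g x₀‖ ≤ ‖κ • yα i‖ + ‖((1:ℂ) - κ) • g x₀‖ :=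
            norm_add_le _ _
        _ = (1-dh) * ‖yα i‖ + dh * ‖g x₀‖ := by
            rw [norm_smul, norm_smul, hκnorm, hκ1, Complex.norm_real, Real.norm_eq_abs,
              abs_of_pos hdhpos]
        _ < 1 := by
            have h5 : (1-dh) * ‖yα i‖ < (1-dh) * 1 :=
              mul_lt_mul_of_pos_left (hyαn i) (by linarith)
            have h6 : dh * ‖g x₀‖ ≤ dh * 1 := by
              have h7 : dh * ‖g x₀‖ ≤ dh * s := mul_le_mul_of_nonneg_left hgx₀ hdhpos.le
              have h8 : dh * s ≤ dh * 1 := mul_le_mul_of_nonneg_left hs1.le hdhpos.le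
              linarith
            linarith
    have hA : g x₀ + v i ∈ oB := (hoBiff _).mpr hAn
    have hBn : ‖κ • yα i‖ < 1 := by
      rw [norm_smul, hκnorm]
      calc (1-dh) * ‖yα i‖ ≤ 1 * ‖yα i‖ :=
            mul_le_mul_of_nonneg_right (by linarith) (norm_nonneg _)
        _ < 1 := by linarith [hyαn i]
    have hB : κ • yα i ∈ oB := (hoBiff _).mpr hBn
    have hd1 : dist (g x₀ + v i) (κ • yα i) < δ₀ := by
      rw [dist_eq_norm]
      have hsub : g x₀ + v i - κ • yα i = ((dh:ℝ):ℂ) • g x₀ := by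
        rw [hvi i, ← hκ1]; module
      rw [hsub, norm_smul, Complex.norm_real, Real.norm_eq_abs, abs_of_pos hdhpos]
      have h7 : dh * ‖g x₀‖ ≤ dh * s := mul_le_mul_of_nonneg_left hgx₀ hdhpos.le
      have h8 : dh * s ≤ dh * 1 := mul_le_mul_of_nonneg_left hs1.le hdhpos.le
      linarith
    have hd2 : dist (κ • yα i) (yα i) < δ₀ := by
      rw [dist_eq_norm]
      have hsub : κ • yα i - yα i = -(((dh:ℝ):ℂ) • yα i) := by
        rw [← hκ1]; module
      rw [hsub, norm_neg, norm_smul, Complex.norm_real, Real.norm_eq_abs,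
        abs_of_pos hdhpos]
      have h7 : dh * ‖yα i‖ ≤ dh * 1 := mul_le_mul_of_nonneg_left (hyαn i).le hdhpos.le
      linarith
    have h1 := hδ₀ _ hA _ hB hd1
    have h2 := hδ₀ _ hB _ (hyB i) hd2
    have h3 := hsep i
    have htri : dist (f₀ (yα i)) (f₀ (g x₀)) ≤ dist (f₀ (yα i)) (f₀ (κ • yα i)) +
        dist (f₀ (κ • yα i)) (f₀ (g x₀ + v i)) + dist (f₀ (g x₀ + v i)) (f₀ (g x₀)) :=
      dist_triangle4 _ _ _ _
    rw [dist_comm] at h2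
    have hd12 : dist (f₀ (κ • yα i)) (f₀ (g x₀ + v i)) < ε/8 := by
      rw [dist_comm]; exact h1
    simp only [dist_eq_norm] at htri h2 hd12
    linarith [htri, hd12, h2, h3]
  have hQpmem : ∀ i, g x₀ + (p * cC) • v i ∈ oB := hΩmem p (Or.inr hpS)
  have hQpt := hQten p x₀ hQpmem
  have hQpsep : ε * (3/4) ≤ ‖Q p x₀ - f₀ (g x₀)‖ := by
    have htt : Filter.Tendsto (fun i => f₀ (g x₀ + (p * cC) • v i) - f₀ (g x₀))
        (U : Filter ι) (𝓝 (Q p x₀ - f₀ (g x₀))) := hQpt.sub tendsto_const_nhds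
    exact ge_of_tendsto htt.norm (Filter.Eventually.of_forall hsep2)
  have hφne : Q p x₀ ≠ Q 0 x₀ := by
    rw [hQ0]
    intro heq
    rw [heq] at hQpsep
    simp only [sub_self, norm_zero] at hQpsep
    linarith
  obtain ⟨μs, r, hrpos, hsub, hinj⟩ := exists_inj_ball hΩopen hΩpre
    Set.subset_union_left (Or.inr hpS) hφd hφne
  -- the reparametrization b
  set b : ℂ → ℂ := fun lam => μs + (((r:ℝ):ℂ)/2) * lam with hbdef
  have hrC : ‖((r:ℝ):ℂ)/2‖ = r/2 := by
    rw [norm_div, Complex.norm_real, Real.norm_eq_abs, abs_of_pos hrpos]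
    simp
  have hbmem : ∀ lam ∈ Metric.ball (0:ℂ) 1, b lam ∈ Metric.ball μs r := by
    intro lam hlam
    rw [mem_ball_zero_iff] at hlam
    rw [mem_ball, dist_eq_norm]
    have hbs : b lam - μs = (((r:ℝ):ℂ)/2) * lam := by rw [hbdef]; ring
    rw [hbs, norm_mul, hrC]
    have h1 : r/2 * ‖lam‖ ≤ r/2 * 1 := mul_le_mul_of_nonneg_left hlam.le (by linarith)
    linarith
  have hb1 : ∀ lam ∈ Metric.ball (0:ℂ) 1, ‖b lam‖ < 1 :=
    fun lam h => mem_ball_zero_iff.mp (hsub (hbmem lam h))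
  have hbdiff : Differentiable ℂ b :=
    (differentiable_id.const_mul (((r:ℝ):ℂ)/2)).const_add μs
  refine ⟨fun lam x => Q (b lam) x, ?_, ?_, ?_⟩
  · -- injectivity
    intro lam₁ h₁ lam₂ h₂ heq
    have hq := heq hx₀
    have hbb : b lam₁ = b lam₂ := hinj (hbmem lam₁ h₁) (hbmem lam₂ h₂) hq
    have hrne : (((r:ℝ):ℂ)/2) ≠ 0 := by
      apply div_ne_zero
      · exact_mod_cast Complex.ofReal_ne_zero.mpr (ne_of_gt hrpos)
      · norm_num
    have hcan : (((r:ℝ):ℂ)/2) * lam₁ = (((r:ℝ):ℂ)/2) * lam₂ := by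
      have := hbb
      rw [hbdef] at this
      simpa using this
    exact mul_left_cancel₀ hrne hcan
  · -- membership in ℋ^∞ and in the cluster set
    intro lam hlam
    have hblt := hb1 lam hlam
    have hmemi : ∀ x ∈ oB, ∀ i, g x + (b lam * cC) • v i ∈ oB :=
      fun x hx i => hE1mem (b lam) hblt x hx i
    constructor
    · constructor
      · -- differentiability in x
        apply keyHolo U hoBopen (F := fun i x => f₀ (g x + (b lam * cC) • v i)) (M := M)
        · intro i
          exact hf.1.comp (hg.1.add_const _) (fun x hx => hmemi x hx i)
        · intro i x hx
          exact hMb _ (hmemi x hx i)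
        · intro x hx
          exact hQten (b lam) x (hmemi x hx)
      · -- boundedness
        refine ⟨M, fun x hx => ?_⟩
        exact le_of_tendsto (hQten (b lam) x (hmemi x hx)).norm
          (Filter.Eventually.of_forall (fun i => hMb _ (hmemi x hx i)))
    · -- InCluster
      refine ⟨ι, (U : Filter ι), U.neBot, fun i y => g y + (b lam * cC) • v i, ?_, ?_, ?_⟩
      · -- each gA i lies in the open unit ball of ℋ^∞(B,ℓ2)
        intro i
        constructor
        · constructor
          · exact hg.1.add_const _
          · exact ⟨s + ‖b lam‖ * ((1-s)/2), fun x hx => hE1 (b lam) x hx i⟩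
        · have hle : supNormV (fun y => g y + (b lam * cC) • v i)
              ≤ s + ‖b lam‖ * ((1-s)/2) :=
            ciSup_le (fun x => hE1 (b lam) x x.2 i)
          have h2 : ‖b lam‖ * ((1-s)/2) < 1 * ((1-s)/2) :=
            mul_lt_mul_of_pos_right hblt (by linarith)
          linarith
      · -- weak-star convergence to g
        intro y hy u
        have hwU : Filter.Tendsto (fun i => (inner ℂ (yα i) u : ℂ)) (U : Filter ι)
            (𝓝 (inner ℂ (g x₀) u)) := (hweak u).mono_left hUl
        have hzero : Filter.Tendsto
            (fun i => (starRingEnd ℂ) (b lam * cC * κ) * ((inner ℂ (yα i) u : ℂ) - inner ℂ (g x₀) u))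
            (U : Filter ι) (𝓝 0) := by
          have hz := (hwU.sub (tendsto_const_nhds (x := (inner ℂ (g x₀) u : ℂ)))).const_mul
            ((starRingEnd ℂ) (b lam * cC * κ))
          simpa using hz
        have hfe : (fun i => (inner ℂ (g y + (b lam * cC) • v i) u : ℂ))
            = fun i => (inner ℂ (g y) u : ℂ)
                + (starRingEnd ℂ) (b lam * cC * κ) * ((inner ℂ (yα i) u : ℂ) - inner ℂ (g x₀) u) := by
          funext i
          rw [hvi i, smul_smul, inner_add_left, inner_smul_left, inner_sub_left]
        rw [hfe]
        have hfin := (tendsto_const_nhds (x := (inner ℂ (g y) u : ℂ))).add hzero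
        simpa using hfin
      · -- convergence of the values
        intro y hy
        have hfe2 : (fun i => fext (g y + (b lam * cC) • v i))
            = fun i => f₀ (g y + (b lam * cC) • v i) :=
          funext fun i => hext.2 (hmemi y hy i)
        rw [hfe2]
        exact hQten (b lam) y (hmemi y hy)
  · -- analyticity in the parameter
    intro x hx
    apply keyHolo U isOpen_ball (F := fun i lam => f₀ (g x + (b lam * cC) • v i)) (M := M)
    · intro i
      refine hf.1.comp ?_ (fun lam hlam => hE1mem (b lam) (hb1 lam hlam) x hx i)
      exact (((hbdiff.mul_const cC).smul_const (v i)).const_add (g x)).differentiableOn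
    · intro i lam hlam
      exact hMb _ (hE1mem (b lam) (hb1 lam hlam) x hx i)
    · intro lam hlam
      exact hQten (b lam) x (fun i => hE1mem (b lam) (hb1 lam hlam) x hx i)
end
end
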